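/- arXiv:2106.13683 — 6 statements merged into one kernel-verified Lean document; each statement's English description precedes it below -/
import Mathlib

section
/- Descent property of the proximal majorization-minimization step: let h : R^n → R be convex satisfying |h(x)−h(y)| ≤ h(x−y) for all x,y, let q₁ : R^p → R be convex, q₂ : R^p → R convex differentiable, λ ≥ 0, g(β) = h(Xβ − b) + λq₁(β) − q₂(β). Given β^k, τ > 0, ι > 0 and residual r satisfying 2h(r) + ι‖r‖² ≤ (ι/2)‖X(β^{k+1} − β^k)‖², if β^{k+1} minimizes f_k(β) := h(Xβ − b + r) + λq₁(β) − q₂(β^k) − ⟨∇q₂(β^k), β − β^k⟩ + (τ/2)‖β − β^k‖² + (ι/2)‖X(β − β^k) + r‖², then g(β^k) ≥ g(β^{k+1}) + (τ/2)‖β^{k+1} − β^k‖². -/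
open scoped InnerProductSpace RealInnerProductSpace

open Set

/-!
`f_k` is a convex function plus the quadratic `(τ/2)‖β - βᵏ‖² + (ι/2)‖X(β - βᵏ) + r‖²`, so
comparing its minimiser `βᵏ⁺¹` with the midpoint of `βᵏ` and `βᵏ⁺¹` (where the quadratic is exactly
its average minus `(τ/8)‖Δ‖² + (ι/8)‖XΔ‖²`, `Δ = βᵏ⁺¹ - βᵏ`) gives
`f_k(βᵏ⁺¹) + (τ/4)‖Δ‖² + (ι/4)‖XΔ‖² ≤ f_k(βᵏ)`.
The gradient inequality for `q₂` and `|h(z + r) - h z| ≤ h r` compare `g` with `f_k` at both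
points, and the condition on `r` absorbs the remaining terms because `‖XΔ/2 + r‖² ≥ 0`.
-/

theorem ConvexOn.add_apply_sub_le_of_hasFDerivAt {E : Type*} [NormedAddCommGroup E]
    [NormedSpace ℝ E] {f : E → ℝ} {f' : E →L[ℝ] ℝ} {x : E} (hf : ConvexOn ℝ univ f)
    (hx : HasFDerivAt f f' x) (y : E) : f x + f' (y - x) ≤ f y := by
  set ℓ : ℝ →ᵃ[ℝ] E := AffineMap.lineMap x y
  have hderiv : HasDerivAt (f ∘ ℓ) (f' (y - x)) 0 := by
    have hx0 : HasFDerivAt f f' (ℓ 0) := by simpa [ℓ] using hx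
    exact hx0.comp_hasDerivAt 0 AffineMap.hasDerivAt_lineMap
  have hslope :=
    (hf.comp_affineMap ℓ).le_slope_of_hasDerivAt (mem_univ 0) (mem_univ 1) one_pos hderiv
  simp only [slope_def_field, Function.comp_apply, ℓ, AffineMap.lineMap_apply_one,
    AffineMap.lineMap_apply_zero, sub_zero, div_one] at hslope
  linarith

theorem ConvexOn.add_inner_sub_le_of_hasGradientAt {E : Type*} [NormedAddCommGroup E]
    [InnerProductSpace ℝ E] [CompleteSpace E] {f : E → ℝ} {f' x : E}
    (hf : ConvexOn ℝ univ f) (hx : HasGradientAt f f' x) (y : E) :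
    f x + ⟪f', y - x⟫ ≤ f y := by
  simpa using hf.add_apply_sub_le_of_hasFDerivAt hx.hasFDerivAt y

theorem norm_half_smul_add_half_smul_sq {F : Type*} [NormedAddCommGroup F]
    [InnerProductSpace ℝ F] (u v : F) :
    ‖(1 / 2 : ℝ) • u + (1 / 2 : ℝ) • v‖ ^ 2 = ‖u‖ ^ 2 / 2 + ‖v‖ ^ 2 / 2 - ‖u - v‖ ^ 2 / 4 := by
  have hpar := parallelogram_law_with_norm ℝ u v
  rw [← smul_add, norm_smul, mul_pow, Real.norm_of_nonneg one_half_pos.le]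
  linarith

theorem ConvexOn.comp_linearMap_add {E F : Type*} [AddCommGroup E] [Module ℝ E]
    [AddCommGroup F] [Module ℝ F] {f : F → ℝ} (hf : ConvexOn ℝ univ f) (A : E →ₗ[ℝ] F) (v : F) :
    ConvexOn ℝ univ fun x => f (A x + v) := by
  simpa [Function.comp_def, add_comm] using (hf.translate_right v).comp_linearMap A

section ProximalObjective

variable {E F : Type*} [NormedAddCommGroup E] [InnerProductSpace ℝ E]
  [NormedAddCommGroup F] [InnerProductSpace ℝ F]

noncomputable def proxObjective (φ : E → ℝ) (A : E →L[ℝ] F) (c : E) (d : F) (τ ι : ℝ) (β : E) :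
    ℝ :=
  φ β + τ / 2 * ‖β - c‖ ^ 2 + ι / 2 * ‖A (β - c) + d‖ ^ 2

variable {φ : E → ℝ} (A : E →L[ℝ] F) (c : E) (d : F) (τ ι : ℝ)

theorem proxObjective_half_smul_add_half_smul_le (hφ : ConvexOn ℝ univ φ) (x y : E) :
    proxObjective φ A c d τ ι ((1 / 2 : ℝ) • x + (1 / 2 : ℝ) • y) ≤
      proxObjective φ A c d τ ι x / 2 + proxObjective φ A c d τ ι y / 2
        - τ / 8 * ‖x - y‖ ^ 2 - ι / 8 * ‖A (x - y)‖ ^ 2 := by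
  have hφmid : φ ((1 / 2 : ℝ) • x + (1 / 2 : ℝ) • y) ≤ φ x / 2 + φ y / 2 := by
    have hconv := hφ.2 (mem_univ x) (mem_univ y) (by norm_num : (0 : ℝ) ≤ 1 / 2)
      (by norm_num : (0 : ℝ) ≤ 1 / 2) (by norm_num)
    simp only [smul_eq_mul] at hconv
    linarith
  have hshift :
      (1 / 2 : ℝ) • x + (1 / 2 : ℝ) • y - c = (1 / 2 : ℝ) • (x - c) + (1 / 2 : ℝ) • (y - c) := by
    module
  have hAshift : A ((1 / 2 : ℝ) • (x - c) + (1 / 2 : ℝ) • (y - c)) + d =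
      (1 / 2 : ℝ) • (A (x - c) + d) + (1 / 2 : ℝ) • (A (y - c) + d) := by
    rw [map_add, map_smul, map_smul]
    module
  have h1 := norm_half_smul_add_half_smul_sq (x - c) (y - c)
  have h2 := norm_half_smul_add_half_smul_sq (A (x - c) + d) (A (y - c) + d)
  rw [sub_sub_sub_cancel_right] at h1
  rw [add_sub_add_right_eq_sub, ← map_sub, sub_sub_sub_cancel_right] at h2
  unfold proxObjective
  rw [hshift, hAshift, h1, h2]
  linarith

theorem proxObjective_add_le_of_forall_le (hφ : ConvexOn ℝ univ φ) {x : E}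
    (hx : ∀ y, proxObjective φ A c d τ ι x ≤ proxObjective φ A c d τ ι y) (y : E) :
    proxObjective φ A c d τ ι x + τ / 4 * ‖x - y‖ ^ 2 + ι / 4 * ‖A (x - y)‖ ^ 2 ≤
      proxObjective φ A c d τ ι y := by
  have hmid := (hx _).trans (proxObjective_half_smul_add_half_smul_le A c d τ ι hφ x y)
  linarith

end ProximalObjective

/-- descent property of the proximal majorization-minimization step:
`g(β^k) ≥ g(β^{k+1}) + (τ/2)‖β^{k+1} - β^k‖²`. -/
theorem ppmm_descent {n p : ℕ}
    (X : EuclideanSpace ℝ (Fin p) →L[ℝ] EuclideanSpace ℝ (Fin n))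
    (b : EuclideanSpace ℝ (Fin n))
    (h : EuclideanSpace ℝ (Fin n) → ℝ)
    (hh_conv : ConvexOn ℝ Set.univ h)
    (hh : ∀ x y, |h x - h y| ≤ h (x - y))
    (q₁ q₂ : EuclideanSpace ℝ (Fin p) → ℝ)
    (hq₁ : ConvexOn ℝ Set.univ q₁) (hq₂ : ConvexOn ℝ Set.univ q₂)
    (lam : ℝ) (hlam : 0 ≤ lam)
    (g : EuclideanSpace ℝ (Fin p) → ℝ)
    (hg : ∀ β, g β = h (X β - b) + lam * q₁ β - q₂ β)
    (βk βk1 : EuclideanSpace ℝ (Fin p))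
    (gq : EuclideanSpace ℝ (Fin p)) (hgq : HasGradientAt q₂ gq βk)
    (τ ι : ℝ) (hτ : 0 < τ) (hι : 0 < ι)
    (r : EuclideanSpace ℝ (Fin n))
    (hr : 2 * h r + ι * ‖r‖ ^ 2 ≤ (ι / 2) * ‖X (βk1 - βk)‖ ^ 2)
    (fk : EuclideanSpace ℝ (Fin p) → ℝ)
    (hfk : ∀ β, fk β = h (X β - b + r) + lam * q₁ β - q₂ βk - ⟪gq, β - βk⟫_ℝ +
        (τ / 2) * ‖β - βk‖ ^ 2 + (ι / 2) * ‖X (β - βk) + r‖ ^ 2)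
    (hmin : ∀ β, fk βk1 ≤ fk β) :
    g βk1 + (τ / 2) * ‖βk1 - βk‖ ^ 2 ≤ g βk := by
  set φ := fun β => h (X β - b + r) + lam * q₁ β - q₂ βk - ⟪gq, β - βk⟫_ℝ
  have hφ : ConvexOn ℝ univ φ := by
    have hhX : ConvexOn ℝ univ fun β => h (X β - b + r) := by
      simpa only [sub_add_eq_add_sub, add_sub_assoc, ContinuousLinearMap.coe_coe]
        using hh_conv.comp_linearMap_add X.toLinearMap (r - b)
    refine (((hhX.add (hq₁.smul hlam)).sub ((innerₛₗ ℝ gq).concaveOn convex_univ)).add_const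
      (⟪gq, βk⟫_ℝ - q₂ βk)).congr fun β _ => ?_
    simp only [Pi.sub_apply, Pi.add_apply, smul_eq_mul, coe_innerₛₗ_apply, inner_sub_right, φ]
    ring
  have hfk_eq : fk = proxObjective φ X βk r τ ι := by
    funext β
    rw [hfk, proxObjective]
  subst hfk_eq
  have hdescent := proxObjective_add_le_of_forall_le X βk r τ ι hφ hmin βk
  have hgrad := hq₂.add_inner_sub_le_of_hasGradientAt hgq βk1
  have hperturb (z : EuclideanSpace ℝ (Fin n)) : |h (z + r) - h z| ≤ h r := by
    simpa using hh (z + r) z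
  have hperturb₁ := (abs_le.mp (hperturb (X βk1 - b))).1
  have hperturb₀ := (abs_le.mp (hperturb (X βk - b))).2
  have hmid : 0 ≤ ‖(1 / 2 : ℝ) • X (βk1 - βk) + r‖ ^ 2 := sq_nonneg _
  rw [norm_add_sq_real, norm_smul, real_inner_smul_left, mul_pow,
    Real.norm_of_nonneg one_half_pos.le] at hmid
  simp only [proxObjective, φ, sub_self, map_zero, zero_add, norm_zero, inner_zero_right,
    norm_add_sq_real] at hdescent
  rw [hg, hg]
  linarith [mul_nonneg hι.le hmid, mul_nonneg hτ.le (sq_nonneg ‖βk1 - βk‖)]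
end

section
/- Let F : R^d ⇉ R^d be a set-valued mapping whose graph is a union of finitely many polyhedral convex sets (piecewise polyhedral). Then there exists a constant κ > 0 such that for every x ∈ R^d, F is locally upper Lipschitz continuous at x with modulus κ: there is a neighborhood U of x with F(y) ⊆ F(x) + κ‖y − x‖·B_d for all y ∈ U, where B_d is the closed unit ball. -/
/-!
Hoffman's lemma: for a finite system `G y ≤ b` of linear inequalities on a finite-dimensional
space, a solution for `b` lies within `C‖b' - b‖` of the solution set for `b'` whenever the latter
is nonempty. It follows by induction on the dimension: Fourier–Motzkin elimination of the last
coordinate produces a system in one variable fewer whose right-hand side depends linearly on `b`,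
and the eliminated coordinate is restored by an explicit one-dimensional bound.

For a polyhedron `P ⊆ E × F` the slice `{w | (x, w) ∈ P}` is such a system with right-hand side
affine in `x`, so slices over the domain of `P` vary Lipschitz-continuously. With compactness this
also makes the domain closed, so near `x` only the pieces of the graph whose domain contains `x`
matter, and the largest of their finitely many constants works for all of them.
-/

/-- A polyhedral convex set: a finite intersection of closed halfspaces. -/
def IsPolyhedron {E : Type*} [NormedAddCommGroup E] [NormedSpace ℝ E] (S : Set E) : Prop :=
  ∃ (k : ℕ) (f : Fin k → (E →ₗ[ℝ] ℝ)) (c : Fin k → ℝ), S = {x | ∀ i, f i x ≤ c i}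

open Filter Topology Metric Module

theorem Finite.exists_forall_le_and_forall_le {α ι κ : Type*} [LinearOrder α] [Nonempty α]
    [Finite ι] [Finite κ] (l : ι → α) (u : κ → α) (h : ∀ i j, l i ≤ u j) :
    ∃ x, (∀ i, l i ≤ x) ∧ ∀ j, x ≤ u j := by
  cases isEmpty_or_nonempty ι with
  | inl _ =>
    obtain ⟨x, hx⟩ := (Set.toFinite (Set.range u)).bddBelow
    exact ⟨x, isEmptyElim, fun j => hx ⟨j, rfl⟩⟩
  | inr _ =>
    obtain ⟨i₀, hi₀⟩ := Finite.exists_max l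
    exact ⟨l i₀, hi₀, h i₀⟩

section FourierMotzkin

variable {ι : Type*}

/-- Fourier–Motzkin elimination of the variable with coefficient column `β`: rows with `β i = 0`
are kept, and every row `p` with `β p > 0` is paired with every row `n` with `β n < 0` using
positive weights for which the variable cancels. -/
abbrev FMIndex (β : ι → ℝ) : Type _ := {i // β i = 0} ⊕ {i // 0 < β i} × {j // β j < 0}

def fmElim (β : ι → ℝ) : (ι → ℝ) →ₗ[ℝ] FMIndex β → ℝ :=
  LinearMap.pi fun
    | .inl i => LinearMap.proj i.1
    | .inr (p, n) => β p • LinearMap.proj n.1 - β n • LinearMap.proj p.1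

variable {β : ι → ℝ}

@[simp] theorem fmElim_apply_inl (r : ι → ℝ) (i : {i // β i = 0}) :
    fmElim β r (.inl i) = r i := rfl

@[simp] theorem fmElim_apply_inr (r : ι → ℝ) (p : {i // 0 < β i}) (n : {j // β j < 0}) :
    fmElim β r (.inr (p, n)) = β p * r n - β n * r p := rfl

theorem fmElim_self : fmElim β β = 0 := by
  ext (i | ⟨p, n⟩)
  · exact i.2
  · simp [mul_comm]

theorem fmElim_nonneg {r : ι → ℝ} (hr : 0 ≤ r) : 0 ≤ fmElim β r := by
  rintro (i | ⟨⟨p, hp⟩, ⟨n, hn⟩⟩)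
  · exact hr i
  · have hrp : 0 ≤ r p := hr p
    have hrn : 0 ≤ r n := hr n
    simp only [Pi.zero_apply, fmElim_apply_inr]
    nlinarith

theorem fmElim_le_of_add_smul_le {z b : ι → ℝ} {t : ℝ} (h : z + t • β ≤ b) :
    fmElim β z ≤ fmElim β b := by
  have := fmElim_nonneg (β := β) (sub_nonneg.2 h)
  rwa [map_sub, map_add, map_smul, fmElim_self, smul_zero, add_zero, sub_nonneg] at this

theorem exists_smul_le_of_fmElim_nonneg {r : ι → ℝ} [Finite ι] (h : 0 ≤ fmElim β r) :
    ∃ t : ℝ, t • β ≤ r := by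
  obtain ⟨t, hlo, hhi⟩ := Finite.exists_forall_le_and_forall_le
    (fun n : {j // β j < 0} => r n / β n) (fun p : {i // 0 < β i} => r p / β p) fun n p => by
      have := h (.inr (p, n))
      rw [div_le_iff_of_neg n.2, div_mul_eq_mul_div, div_le_iff₀ p.2]
      simp only [Pi.zero_apply, fmElim_apply_inr] at this
      linarith
  refine ⟨t, fun i => ?_⟩
  rcases lt_trichotomy (β i) 0 with hn | h0 | hp
  · exact (div_le_iff_of_neg hn).1 (hlo ⟨i, hn⟩)
  · simpa [h0] using h (.inl ⟨i, h0⟩)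
  · exact (le_div_iff₀ hp).1 (hhi ⟨i, hp⟩)

end FourierMotzkin

section Hoffman

variable {E F : Type*} [NormedAddCommGroup E] [NormedSpace ℝ E] [NormedAddCommGroup F]
  [NormedSpace ℝ F] {ι : Type*} [Fintype ι]

def IsHoffmanConstant (G : E →ₗ[ℝ] ι → ℝ) (C : ℝ) : Prop :=
  ∀ b b' y y₀, G y ≤ b → G y₀ ≤ b' → ∃ y', G y' ≤ b' ∧ ‖y' - y‖ ≤ C * ‖b' - b‖

theorem IsHoffmanConstant.of_subsingleton [Subsingleton E] (G : E →ₗ[ℝ] ι → ℝ) :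
    IsHoffmanConstant G 0 :=
  fun _ _ y y₀ _ h₀ => ⟨y₀, h₀, by simp [Subsingleton.elim y₀ y]⟩

theorem IsHoffmanConstant.of_comp {G : F →ₗ[ℝ] ι → ℝ} {C : ℝ} (e : E ≃L[ℝ] F)
    (h : IsHoffmanConstant (G ∘ₗ (e : E →ₗ[ℝ] F)) C) :
    IsHoffmanConstant G (‖(e : E →L[ℝ] F)‖ * C) := by
  intro b b' y y₀ hy hy₀
  obtain ⟨x', hx', hdist⟩ := h b b' (e.symm y) (e.symm y₀) (by simpa using hy) (by simpa using hy₀)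
  refine ⟨e x', hx', ?_⟩
  calc ‖e x' - y‖ = ‖(e : E →L[ℝ] F) (x' - e.symm y)‖ := by simp
    _ ≤ ‖(e : E →L[ℝ] F)‖ * ‖x' - e.symm y‖ := ContinuousLinearMap.le_opNorm _ _
    _ ≤ ‖(e : E →L[ℝ] F)‖ * (C * ‖b' - b‖) := by gcongr
    _ = _ := by ring

/-- The witness is `max t₀ (t - c‖r' - r‖)`: by `hβc`, lowering `t` by `c‖r' - r‖` absorbs the
change of right-hand side in every row with `β i > 0`. -/
theorem exists_smul_le_near_of_le {β r r' : ι → ℝ} {c t t₀ : ℝ} (hc : 0 ≤ c)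
    (hβc : ∀ i, β i ≠ 0 → 1 ≤ |β i| * c) (ht : t • β ≤ r) (ht₀ : t₀ • β ≤ r')
    (hle : t₀ ≤ t) : ∃ t' : ℝ, t' • β ≤ r' ∧ |t' - t| ≤ c * ‖r' - r‖ := by
  set δ := ‖r' - r‖
  have hδ : 0 ≤ c * δ := by positivity
  refine ⟨max t₀ (t - c * δ), fun i => ?_, ?_⟩
  · have hti : t * β i ≤ r i := ht i
    have ht₀i : t₀ * β i ≤ r' i := ht₀ i
    simp only [Pi.smul_apply, smul_eq_mul]
    rcases le_or_gt (β i) 0 with hn | hp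
    · exact (mul_le_mul_of_nonpos_right (le_max_left _ _) hn).trans ht₀i
    · have hri : r i - r' i ≤ δ := by
        have := norm_le_pi_norm (r' - r) i
        rw [Real.norm_eq_abs, Pi.sub_apply, abs_sub_comm] at this
        exact (le_abs_self _).trans this
      have hδi : δ ≤ β i * (c * δ) := by
        have := hβc i hp.ne'
        rw [abs_of_pos hp] at this
        nlinarith [norm_nonneg (r' - r)]
      rw [max_mul_of_nonneg _ _ hp.le]
      exact max_le ht₀i (by linarith)
  · rw [abs_sub_le_iff]
    constructor
    · linarith [max_le hle (show t - c * δ ≤ t by linarith)]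
    · linarith [le_max_right t₀ (t - c * δ)]

theorem exists_isHoffmanConstant_toSpanSingleton (β : ι → ℝ) :
    ∃ c ≥ 0, IsHoffmanConstant (LinearMap.toSpanSingleton ℝ (ι → ℝ) β) c := by
  have hβc : ∀ i, β i ≠ 0 → 1 ≤ |β i| * ∑ j, |β j|⁻¹ := fun i hi =>
    calc 1 = |β i| * |β i|⁻¹ := (mul_inv_cancel₀ (abs_ne_zero.2 hi)).symm
      _ ≤ |β i| * ∑ j, |β j|⁻¹ := by
        gcongr
        exact Finset.single_le_sum (fun j _ => inv_nonneg.2 (abs_nonneg (β j))) (Finset.mem_univ i)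
  have hc : 0 ≤ ∑ j, |β j|⁻¹ := by positivity
  refine ⟨_, hc, fun r r' t t₀ ht ht₀ => ?_⟩
  simp only [LinearMap.toSpanSingleton_apply] at ht ht₀ ⊢
  rcases le_total t₀ t with hle | hle
  · exact exists_smul_le_near_of_le hc hβc ht ht₀ hle
  · obtain ⟨t', ht', hdist⟩ := exists_smul_le_near_of_le (β := -β) (t := -t) (t₀ := -t₀) hc
      (by simpa using hβc) (by simpa using ht) (by simpa using ht₀) (neg_le_neg hle)
    refine ⟨-t', by simpa using ht', ?_⟩
    rwa [Real.norm_eq_abs, show -t' - t = -(t' - -t) by ring, abs_neg]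

theorem exists_isHoffmanConstant_prod [FiniteDimensional ℝ E] {ι : Type} [Fintype ι]
    (hE : ∀ (J : Type) [Fintype J] (G : E →ₗ[ℝ] J → ℝ), ∃ C ≥ 0, IsHoffmanConstant G C)
    (G : E × ℝ →ₗ[ℝ] ι → ℝ) : ∃ C ≥ 0, IsHoffmanConstant G C := by
  set β := G (0, 1)
  set G₁ := G ∘ₗ LinearMap.inl ℝ E ℝ
  have hG : ∀ z t, G (z, t) = G₁ z + t • β := fun z t => by
    rw [show ((z, t) : E × ℝ) = (z, 0) + t • (0, 1) by simp, map_add, map_smul]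
    rfl
  let L := LinearMap.toContinuousLinearMap (fmElim β)
  let H := LinearMap.toContinuousLinearMap G₁
  let _ : Fintype (FMIndex β) := .ofFinite _
  obtain ⟨C, hC, hCG⟩ := hE (FMIndex β) (fmElim β ∘ₗ G₁)
  obtain ⟨c, hc, hcβ⟩ := exists_isHoffmanConstant_toSpanSingleton β
  refine ⟨C * ‖L‖ + c * (1 + ‖H‖ * (C * ‖L‖)), by positivity, ?_⟩
  rintro b b' ⟨z, t⟩ ⟨z₀, t₀⟩ hy hy₀
  rw [hG] at hy hy₀
  obtain ⟨z', hz', hzz'⟩ := hCG (fmElim β b) (fmElim β b') z z₀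
    (fmElim_le_of_add_smul_le hy) (fmElim_le_of_add_smul_le hy₀)
  obtain ⟨s, hs⟩ := exists_smul_le_of_fmElim_nonneg (β := β) (r := b' - G₁ z')
    (by simpa [sub_nonneg] using hz')
  obtain ⟨t', ht', htt'⟩ := hcβ (b - G₁ z) (b' - G₁ z') t s
    (by simpa [le_sub_iff_add_le'] using hy) (by simpa using hs)
  refine ⟨(z', t'), by simpa [hG, le_sub_iff_add_le'] using ht', ?_⟩
  set δ := ‖b' - b‖
  have hz : ‖z' - z‖ ≤ C * ‖L‖ * δ :=
    calc ‖z' - z‖ ≤ C * ‖L (b' - b)‖ := by simpa [L] using hzz'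
      _ ≤ C * (‖L‖ * δ) := by gcongr; exact L.le_opNorm _
      _ = C * ‖L‖ * δ := by ring
  have ht : ‖t' - t‖ ≤ c * (1 + ‖H‖ * (C * ‖L‖)) * δ :=
    calc ‖t' - t‖ ≤ c * ‖(b' - b) - H (z' - z)‖ := by
          simpa [H, sub_sub_sub_comm] using htt'
      _ ≤ c * (δ + ‖H‖ * (C * ‖L‖ * δ)) := by
          gcongr
          refine (norm_sub_le _ _).trans (by gcongr; exact (H.le_opNorm _).trans (by gcongr))
      _ = c * (1 + ‖H‖ * (C * ‖L‖)) * δ := by ring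
  have h₁ : 0 ≤ C * ‖L‖ := by positivity
  have h₂ : 0 ≤ c * (1 + ‖H‖ * (C * ‖L‖)) := by positivity
  exact norm_prod_le_iff.2 ⟨hz.trans (by gcongr; linarith), ht.trans (by gcongr; linarith)⟩

theorem exists_isHoffmanConstant_pi (m : ℕ) {ι : Type} [Fintype ι]
    (G : (Fin m → ℝ) →ₗ[ℝ] ι → ℝ) : ∃ C ≥ 0, IsHoffmanConstant G C := by
  induction m generalizing ι with
  | zero => exact ⟨0, le_rfl, .of_subsingleton G⟩
  | succ m ih =>
    let e : ((Fin m → ℝ) × ℝ) ≃L[ℝ] (Fin (m + 1) → ℝ) := .ofFinrankEq (by simp)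
    obtain ⟨C, hC, hGC⟩ := exists_isHoffmanConstant_prod (fun J _ G' => ih G') (G ∘ₗ (e : _ →ₗ[ℝ] _))
    exact ⟨_, by positivity, hGC.of_comp e⟩

theorem exists_isHoffmanConstant [FiniteDimensional ℝ E] {ι : Type} [Fintype ι]
    (G : E →ₗ[ℝ] ι → ℝ) : ∃ C ≥ 0, IsHoffmanConstant G C := by
  let e : (Fin (finrank ℝ E) → ℝ) ≃L[ℝ] E := .ofFinrankEq (by simp)
  obtain ⟨C, hC, hGC⟩ := exists_isHoffmanConstant_pi (finrank ℝ E)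
    (G ∘ₗ (e : (Fin (finrank ℝ E) → ℝ) →ₗ[ℝ] E))
  exact ⟨_, by positivity, hGC.of_comp e⟩

end Hoffman

section Slices

variable {E F : Type*} [NormedAddCommGroup E] [NormedAddCommGroup F]

def HasLipschitzSlices (P : Set (E × F)) (κ : ℝ) : Prop :=
  ∀ x z y w, (x, z) ∈ P → (y, w) ∈ P → ∃ w', (x, w') ∈ P ∧ ‖w - w'‖ ≤ κ * ‖y - x‖

theorem HasLipschitzSlices.isClosed_image_fst [ProperSpace F] {P : Set (E × F)} {κ : ℝ}
    (h : HasLipschitzSlices P κ) (hP : IsClosed P) (hκ : 0 ≤ κ) : IsClosed (Prod.fst '' P) := by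
  refine isSeqClosed_iff_isClosed.1 fun u x hu hux => ?_
  obtain ⟨⟨x₀, z₀⟩, hz₀, -⟩ := hu 0
  have hw : ∀ n, ∃ w, (u n, w) ∈ P ∧ ‖z₀ - w‖ ≤ κ * ‖x₀ - u n‖ := fun n => by
    obtain ⟨⟨_, v⟩, hv, rfl⟩ := hu n
    exact h _ _ _ _ hv hz₀
  choose w hwP hw using hw
  obtain ⟨R, hR⟩ := isBounded_iff_forall_norm_le.1 (isBounded_range_of_tendsto u hux)
  have hbdd : ∀ n, w n ∈ closedBall z₀ (κ * (‖x₀‖ + R)) := fun n => by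
    rw [mem_closedBall_iff_norm']
    refine (hw n).trans ?_
    gcongr
    exact (norm_sub_le _ _).trans (by gcongr; exact hR _ ⟨n, rfl⟩)
  obtain ⟨a, -, φ, hφ, ha⟩ := tendsto_subseq_of_bounded isBounded_closedBall hbdd
  exact ⟨(x, a), hP.mem_of_tendsto ((hux.comp hφ.tendsto_atTop).prodMk_nhds ha)
    (.of_forall fun n => hwP (φ n)), rfl⟩

theorem HasLipschitzSlices.eventually [ProperSpace F] {P : Set (E × F)} {κ : ℝ}
    (h : HasLipschitzSlices P κ) (hP : IsClosed P) (hκ : 0 ≤ κ) (x : E) :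
    ∀ᶠ y in 𝓝 x, ∀ v, (y, v) ∈ P → ∃ w, (x, w) ∈ P ∧ ‖v - w‖ ≤ κ * ‖y - x‖ := by
  by_cases hx : x ∈ Prod.fst '' P
  · obtain ⟨⟨x, z⟩, hz, rfl⟩ := hx
    exact .of_forall fun y v hv => h _ _ _ _ hz hv
  · filter_upwards [(h.isClosed_image_fst hP hκ).isOpen_compl.mem_nhds hx] with y hy v hv
    exact absurd ⟨_, hv, rfl⟩ hy

end Slices

section Polyhedron

variable {E F : Type*} [NormedAddCommGroup E] [NormedSpace ℝ E] [NormedAddCommGroup F]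
  [NormedSpace ℝ F]

theorem IsPolyhedron.isClosed [FiniteDimensional ℝ E] {S : Set E} (hS : IsPolyhedron S) :
    IsClosed S := by
  obtain ⟨k, f, c, rfl⟩ := hS
  simp only [Set.ofPred_forall]
  exact isClosed_iInter fun i =>
    isClosed_le (f i).continuous_of_finiteDimensional continuous_const

theorem IsPolyhedron.exists_hasLipschitzSlices [FiniteDimensional ℝ E] [FiniteDimensional ℝ F]
    {P : Set (E × F)} (hP : IsPolyhedron P) : ∃ κ ≥ 0, HasLipschitzSlices P κ := by
  obtain ⟨k, f, c, rfl⟩ := hP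
  let G : F →ₗ[ℝ] Fin k → ℝ := LinearMap.pi fun i => f i ∘ₗ LinearMap.inr ℝ E F
  let H : E →L[ℝ] Fin k → ℝ :=
    LinearMap.toContinuousLinearMap (LinearMap.pi fun i => f i ∘ₗ LinearMap.inl ℝ E F)
  have hmem : ∀ u v, (u, v) ∈ {p : E × F | ∀ i, f i p ≤ c i} ↔ G v ≤ c - H u := fun u v => by
    have hf : ∀ i, f i (u, v) = H u i + G v i := fun i => by
      rw [show ((u, v) : E × F) = (u, 0) + (0, v) by simp, map_add]
      rfl
    simp only [Set.mem_ofPred_eq, hf, Pi.le_def, Pi.add_apply, le_sub_iff_add_le']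
  obtain ⟨C, hC, hG⟩ := exists_isHoffmanConstant G
  refine ⟨C * ‖H‖, by positivity, fun x z y w hz hw => ?_⟩
  obtain ⟨w', hw', hdist⟩ := hG (c - H y) (c - H x) w z ((hmem y w).1 hw) ((hmem x z).1 hz)
  refine ⟨w', (hmem x w').2 hw', ?_⟩
  calc ‖w - w'‖ ≤ C * ‖H (y - x)‖ := by simpa [norm_sub_rev w] using hdist
    _ ≤ C * (‖H‖ * ‖y - x‖) := by gcongr; exact H.le_opNorm _
    _ = C * ‖H‖ * ‖y - x‖ := by ring

end Polyhedron

/-- Robinson: a piecewise polyhedral set-valued mapping is locally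
upper Lipschitz continuous everywhere with a uniform modulus `κ`. -/
theorem piecewise_polyhedral_upper_lipschitz {d : ℕ}
    (F : EuclideanSpace ℝ (Fin d) → Set (EuclideanSpace ℝ (Fin d)))
    (ι : Type) (hι : Fintype ι)
    (P : ι → Set (EuclideanSpace ℝ (Fin d) × EuclideanSpace ℝ (Fin d)))
    (hP : ∀ i, IsPolyhedron (P i))
    (hgraph : {p : EuclideanSpace ℝ (Fin d) × EuclideanSpace ℝ (Fin d) | p.2 ∈ F p.1} =
      ⋃ i, P i) :
    ∃ κ > (0 : ℝ), ∀ x : EuclideanSpace ℝ (Fin d), ∃ U ∈ nhds x, ∀ y ∈ U,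
      F y ⊆ {z | ∃ w ∈ F x, ‖z - w‖ ≤ κ * ‖y - x‖} := by
  have : Finite ι := @Finite.of_fintype ι hι
  have hmem : ∀ y v, v ∈ F y ↔ ∃ i, (y, v) ∈ P i := fun y v => by
    simpa using Set.ext_iff.1 hgraph (y, v)
  choose κ hκ₀ hκ using fun i => (hP i).exists_hasLipschitzSlices
  obtain ⟨K, hK⟩ := (Set.toFinite (Set.range κ)).bddAbove
  refine ⟨max K 1, by positivity, fun x => ?_⟩
  obtain ⟨U, hU, hUP⟩ :=
    (eventually_all.2 fun i => (hκ i).eventually (hP i).isClosed (hκ₀ i) x).exists_mem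
  refine ⟨U, hU, fun y hy v hv => ?_⟩
  obtain ⟨i, hi⟩ := (hmem y v).1 hv
  obtain ⟨w, hw, hvw⟩ := hUP y hy i v hi
  refine ⟨w, (hmem x w).2 ⟨i, hw⟩, hvw.trans ?_⟩
  gcongr
  exact (hK ⟨i, rfl⟩).trans (le_max_left _ _)
end

section
/- Dual recovery for the regularized subproblem: let h, q₁ be proper lsc convex functions, τ, ι > 0, and consider min over (β,y) of h(y) + λq₁(β) − ⟨w̃, β − β̃⟩ + (τ/2)‖β − β̃‖² + (ι/2)‖y + b − Xβ̃‖² subject to Xβ − y − b = 0. If ū solves the dual problem (minimizing φ as defined), then β̄ = Prox_{τ^{-1}λq₁}(−τ^{-1}Xᵀū + τ^{-1}w̃ + β̃) and ȳ = Prox_{ι^{-1}h}(ι^{-1}ū + Xβ̃ − b) form an optimal solution of the primal problem. -/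
open scoped InnerProductSpace RealInnerProductSpace

section Helpers

lemma nonneg_of_small_t' (a Q : ℝ) (hQ : 0 ≤ Q)
    (hkey : ∀ t : ℝ, 0 < t → t < 1 → -(t * Q / 2) ≤ a) : 0 ≤ a := by
  rcases eq_or_lt_of_le hQ with hz | hz
  · have := hkey (1/2) (by norm_num) (by norm_num); rw [← hz] at this; linarith
  · by_contra hc
    push_neg at hc
    have ht0 : 0 < min (1/2 : ℝ) (-a / Q) := lt_min (by norm_num) (div_pos (by linarith) hz)
    have ht1 : min (1/2 : ℝ) (-a / Q) < 1 := lt_of_le_of_lt (min_le_left _ _) (by norm_num)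
    have hk := hkey _ ht0 ht1
    have hta : min (1/2 : ℝ) (-a / Q) * Q ≤ -a := by
      calc min (1/2 : ℝ) (-a / Q) * Q ≤ (-a / Q) * Q :=
            mul_le_mul_of_nonneg_right (min_le_right _ _) hQ
        _ = -a := by field_simp
    nlinarith

variable {E : Type*} [NormedAddCommGroup E] [InnerProductSpace ℝ E]

lemma quad_sc' (w v x : E) (t : ℝ) :
    ‖(w + t • (v - w)) - x‖ ^ 2
      = (1 - t) * ‖w - x‖ ^ 2 + t * ‖v - x‖ ^ 2 - t * (1 - t) * ‖v - w‖ ^ 2 := by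
  simp only [← real_inner_self_eq_norm_sq, inner_sub_left, inner_sub_right, inner_add_left,
    inner_add_right, real_inner_smul_left, real_inner_smul_right]
  ring_nf

lemma quad_growth' {f : E → ℝ} (hf : ConvexOn ℝ Set.univ f) (μ : ℝ) (hμ : 0 ≤ μ) (x : E)
    {w : E} (hw : IsMinOn (fun z => μ * f z + ‖z - x‖ ^ 2 / 2) Set.univ w) (v : E) :
    μ * f w + ‖w - x‖ ^ 2 / 2 + ‖v - w‖ ^ 2 / 2 ≤ μ * f v + ‖v - x‖ ^ 2 / 2 := by
  have key : ∀ t : ℝ, 0 < t → t < 1 →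
      -(t * ‖v - w‖ ^ 2 / 2) ≤ (μ * f v + ‖v - x‖ ^ 2 / 2)
        - (μ * f w + ‖w - x‖ ^ 2 / 2) - ‖v - w‖ ^ 2 / 2 := by
    intro t ht0 ht1
    have hmin : μ * f w + ‖w - x‖ ^ 2 / 2
        ≤ μ * f (w + t • (v - w)) + ‖(w + t • (v - w)) - x‖ ^ 2 / 2 := hw (Set.mem_univ _)
    have harg : (1 - t) • w + t • v = w + t • (v - w) := by
      rw [smul_sub, sub_smul, one_smul]; abel
    have hconv : f (w + t • (v - w)) ≤ (1 - t) * f w + t * f v := by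
      have h1 := hf.2 (Set.mem_univ w) (Set.mem_univ v) (by linarith : (0:ℝ) ≤ 1 - t)
        (le_of_lt ht0) (by ring)
      rw [harg] at h1
      simpa [smul_eq_mul] using h1
    have hquad := quad_sc' w v x t
    have hcomb : μ * f w + ‖w - x‖ ^ 2 / 2
        ≤ (1 - t) * (μ * f w + ‖w - x‖ ^ 2 / 2) + t * (μ * f v + ‖v - x‖ ^ 2 / 2)
          - t * (1 - t) * ‖v - w‖ ^ 2 / 2 := by nlinarith [hmin, hconv, hquad, hμ]
    by_contra hh
    push_neg at hh
    have h4 := mul_lt_mul_of_pos_left hh ht0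
    nlinarith [h4, hcomb]
  have := nonneg_of_small_t' _ _ (sq_nonneg ‖v - w‖) key
  linarith

lemma exp1' (c : ℝ) (u a : E) : ‖c • u + a‖^2 = c^2 * ‖u‖^2 + 2*c*⟪u,a⟫_ℝ + ‖a‖^2 := by
  rw [norm_add_sq_real, norm_smul, real_inner_smul_left]
  simp [mul_pow, sq_abs]; ring

lemma exp2' (c : ℝ) (u a : E) : ‖a - c • u‖^2 = ‖a‖^2 - 2*c*⟪a,u⟫_ℝ + c^2*‖u‖^2 := by
  rw [norm_sub_sq_real, real_inner_smul_right, norm_smul]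
  simp [mul_pow, sq_abs]; ring

end Helpers

set_option maxHeartbeats 2000000

/-- dual recovery for the regularized subproblem: if `ū` minimizes the
dual objective `φ`, then `β̄ = Prox_{τ⁻¹λq₁}(-τ⁻¹Xᵀū + τ⁻¹w̃ + β̃)` and
`ȳ = Prox_{ι⁻¹h}(ι⁻¹ū + Xβ̃ - b)` form an optimal solution of the primal problem. -/
theorem dual_recovery {n p : ℕ}
    (X : EuclideanSpace ℝ (Fin p) →L[ℝ] EuclideanSpace ℝ (Fin n))
    (b : EuclideanSpace ℝ (Fin n)) (βt wt : EuclideanSpace ℝ (Fin p))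
    (lam τ ι : ℝ) (hlam : 0 ≤ lam) (hτ : 0 < τ) (hι : 0 < ι)
    (h : EuclideanSpace ℝ (Fin n) → ℝ)
    (hh_conv : ConvexOn ℝ Set.univ h) (hh_lsc : LowerSemicontinuous h)
    (q₁ : EuclideanSpace ℝ (Fin p) → ℝ)
    (hq₁_conv : ConvexOn ℝ Set.univ q₁) (hq₁_lsc : LowerSemicontinuous q₁)
    (proxH : EuclideanSpace ℝ (Fin n) → EuclideanSpace ℝ (Fin n))
    (hproxH : ∀ x, IsMinOn (fun w => ι⁻¹ * h w + ‖w - x‖ ^ 2 / 2) Set.univ (proxH x))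
    (proxQ : EuclideanSpace ℝ (Fin p) → EuclideanSpace ℝ (Fin p))
    (hproxQ : ∀ x, IsMinOn (fun w => τ⁻¹ * (lam * q₁ w) + ‖w - x‖ ^ 2 / 2) Set.univ (proxQ x))
    (φ : EuclideanSpace ℝ (Fin n) → ℝ)
    (hφ : ∀ u, φ u =
      (ι / 2) * ‖ι⁻¹ • u + X βt - b‖ ^ 2
      - (ι / 2) * ‖ι⁻¹ • u + X βt - b - proxH (ι⁻¹ • u + X βt - b)‖ ^ 2
      - h (proxH (ι⁻¹ • u + X βt - b))
      + (τ / 2) * ‖-(τ⁻¹ • (ContinuousLinearMap.adjoint X u)) + τ⁻¹ • wt + βt‖ ^ 2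
      - (τ / 2) * ‖-(τ⁻¹ • (ContinuousLinearMap.adjoint X u)) + τ⁻¹ • wt + βt
          - proxQ (-(τ⁻¹ • (ContinuousLinearMap.adjoint X u)) + τ⁻¹ • wt + βt)‖ ^ 2
      - lam * q₁ (proxQ (-(τ⁻¹ • (ContinuousLinearMap.adjoint X u)) + τ⁻¹ • wt + βt))
      + ⟪u, b⟫_ℝ)
    (P : EuclideanSpace ℝ (Fin p) → EuclideanSpace ℝ (Fin n) → ℝ)
    (hP : ∀ β y, P β y = h y + lam * q₁ β - ⟪wt, β - βt⟫_ℝ +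
        (τ / 2) * ‖β - βt‖ ^ 2 + (ι / 2) * ‖y + b - X βt‖ ^ 2)
    (ubar : EuclideanSpace ℝ (Fin n)) (hubar : ∀ u, φ ubar ≤ φ u)
    (βbar : EuclideanSpace ℝ (Fin p))
    (hβbar : βbar = proxQ (-(τ⁻¹ • (ContinuousLinearMap.adjoint X ubar)) + τ⁻¹ • wt + βt))
    (ybar : EuclideanSpace ℝ (Fin n))
    (hybar : ybar = proxH (ι⁻¹ • ubar + X βt - b)) :
    X βbar - ybar - b = 0 ∧
      ∀ β y, X β - y - b = 0 → P βbar ybar ≤ P β y := by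
  have hι0 : ι ≠ 0 := ne_of_gt hι
  have hτ0 : τ ≠ 0 := ne_of_gt hτ
  set Xa := ContinuousLinearMap.adjoint X with hXa
  -- the Lagrangian
  set L : EuclideanSpace ℝ (Fin n) → EuclideanSpace ℝ (Fin p) → EuclideanSpace ℝ (Fin n) → ℝ :=
    fun u β y => P β y + ⟪u, X β - y - b⟫_ℝ with hL
  -- shifted prox centers
  set cu : EuclideanSpace ℝ (Fin n) → EuclideanSpace ℝ (Fin n) :=
    fun u => ι⁻¹ • u + X βt - b with hcu
  set du : EuclideanSpace ℝ (Fin n) → EuclideanSpace ℝ (Fin p) :=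
    fun u => -(τ⁻¹ • Xa u) + τ⁻¹ • wt + βt with hdu
  set Ee : EuclideanSpace ℝ (Fin n) → ℝ := fun u =>
    -⟪u, X βt - b⟫_ℝ - ι⁻¹ * ‖u‖^2/2 - τ⁻¹ * ‖wt - Xa u‖^2/2 + ⟪Xa u, βt⟫_ℝ - ⟪u, b⟫_ℝ
    with hEe
  set Cv : ℝ := (ι/2) * ‖X βt - b‖^2 + (τ/2) * ‖βt‖^2 + ⟪wt, βt⟫_ℝ with hCv
  -- Identity (1): Lagrangian in prox form
  have hLG : ∀ u β y, L u β y =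
      ι * (ι⁻¹ * h y + ‖y - cu u‖^2/2) + τ * (τ⁻¹ * (lam * q₁ β) + ‖β - du u‖^2/2) + Ee u := by
    intro u β y
    have ey : y - cu u = (y + b - X βt) - ι⁻¹ • u := by
      simp only [hcu]; abel
    have eβ : β - du u = (β - βt) - τ⁻¹ • (wt - Xa u) := by
      simp only [hdu, smul_sub]; abel
    simp only [hL, hP, ey, eβ, exp2']
    simp only [inner_sub_left, inner_sub_right, inner_add_left, inner_add_right, hEe]
    rw [show ⟪u, X β⟫_ℝ = ⟪Xa u, β⟫_ℝ from (ContinuousLinearMap.adjoint_inner_left _ _ _).symm]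
    rw [real_inner_comm y u, real_inner_comm b u, real_inner_comm (X βt) u,
      real_inner_comm β wt, real_inner_comm β (Xa u), real_inner_comm βt (Xa u),
      real_inner_comm βt wt]
    field_simp
    ring
  -- Identity (2): the constant
  have hCid : ∀ u, (ι/2) * ‖cu u‖^2 + (τ/2) * ‖du u‖^2 + ⟪u, b⟫_ℝ + Ee u = Cv := by
    intro u
    have e1 : cu u = ι⁻¹ • u + (X βt - b) := by simp only [hcu]; abel
    have e2 : du u = τ⁻¹ • (wt - Xa u) + βt := by simp only [hdu, smul_sub]; abel
    rw [e1, e2, exp1', exp1']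
    simp only [inner_sub_left, inner_sub_right, hEe, hCv]
    field_simp
    ring
  -- Identity (3): φ via the Lagrangian at the prox points
  have hφL : ∀ u, φ u = Cv - L u (proxQ (du u)) (proxH (cu u)) := by
    intro u
    have h1 := hLG u (proxQ (du u)) (proxH (cu u))
    have h2 := hCid u
    have h3 := hφ u
    rw [show (ι⁻¹ • u + X βt - b) = cu u from rfl] at h3
    rw [show (-(τ⁻¹ • Xa u) + τ⁻¹ • wt + βt) = du u from rfl] at h3
    have hns : ‖cu u - proxH (cu u)‖ = ‖proxH (cu u) - cu u‖ := norm_sub_rev _ _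
    have hns2 : ‖du u - proxQ (du u)‖ = ‖proxQ (du u) - du u‖ := norm_sub_rev _ _
    rw [hns, hns2] at h3
    have hexp : ι * (ι⁻¹ * h (proxH (cu u)) + ‖proxH (cu u) - cu u‖^2/2)
        = h (proxH (cu u)) + (ι/2) * ‖proxH (cu u) - cu u‖^2 := by
      field_simp
    have hexp2 : τ * (τ⁻¹ * (lam * q₁ (proxQ (du u))) + ‖proxQ (du u) - du u‖^2/2)
        = lam * q₁ (proxQ (du u)) + (τ/2) * ‖proxQ (du u) - du u‖^2 := by
      field_simp
    rw [h3, h1, hexp, hexp2]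
    linarith [h2]
  -- strong-convexity lower bound for L in (β, y)
  have hgrow : ∀ u β y,
      L u (proxQ (du u)) (proxH (cu u)) + (τ/2) * ‖β - proxQ (du u)‖^2
        + (ι/2) * ‖y - proxH (cu u)‖^2 ≤ L u β y := by
    intro u β y
    have g1 := quad_growth' hh_conv ι⁻¹ (inv_nonneg.mpr (le_of_lt hι)) (cu u) (hproxH (cu u)) y
    have g2 := quad_growth' (f := q₁) hq₁_conv (τ⁻¹ * lam) (mul_nonneg (inv_nonneg.mpr (le_of_lt hτ)) hlam) (du u)
      (by simpa only [mul_assoc] using hproxQ (du u)) β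
    have g1' := mul_le_mul_of_nonneg_left g1 (le_of_lt hι)
    have g2' := mul_le_mul_of_nonneg_left g2 (le_of_lt hτ)
    rw [hLG u β y, hLG u (proxQ (du u)) (proxH (cu u))]
    simp only [mul_add] at g1' g2' ⊢
    have hmc : τ * (τ⁻¹ * lam * q₁ (proxQ (du u))) = τ * (τ⁻¹ * (lam * q₁ (proxQ (du u)))) := by
      ring
    nlinarith [g1', g2']
  -- feasibility
  have hfeas : X βbar - ybar - b = 0 := by
    set c₀ : EuclideanSpace ℝ (Fin n) := X βbar - ybar - b with hc₀
    have hφub : φ ubar = Cv - L ubar βbar ybar := by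
      rw [hφL ubar, hβbar, hybar]
    -- key inequality for arbitrary u
    have hkey : ∀ u : EuclideanSpace ℝ (Fin n),
        ⟪u - ubar, c₀⟫_ℝ ≤ ‖Xa (u - ubar)‖^2/(2*τ) + ‖u - ubar‖^2/(2*ι) := by
      intro u
      set βu := proxQ (du u) with hβu
      set yu := proxH (cu u) with hyu
      have hshift : L u βu yu = L ubar βu yu + ⟪u - ubar, X βu - yu - b⟫_ℝ := by
        simp only [hL, inner_sub_left]; ring
      have hlow := hgrow ubar βu yu
      rw [← hβbar, ← hybar] at hlow
      have hdecomp : X βu - yu - b = c₀ + (X (βu - βbar) - (yu - ybar)) := by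
        simp only [hc₀, map_sub]; abel
      have hinner : ⟪u - ubar, X βu - yu - b⟫_ℝ
          = ⟪u - ubar, c₀⟫_ℝ + ⟪Xa (u - ubar), βu - βbar⟫_ℝ - ⟪u - ubar, yu - ybar⟫_ℝ := by
        rw [hdecomp]
        simp only [inner_add_right, inner_sub_right,
          show ∀ (v : EuclideanSpace ℝ (Fin n)) (w : EuclideanSpace ℝ (Fin p)),
              ⟪v, X w⟫_ℝ = ⟪Xa v, w⟫_ℝ from fun v w =>
            (ContinuousLinearMap.adjoint_inner_left _ _ _).symm]
        ring
      have hb1 : ⟪Xa (u - ubar), βu - βbar⟫_ℝ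
          ≥ -((τ/2) * ‖βu - βbar‖^2 + ‖Xa (u - ubar)‖^2/(2*τ)) := by
        have h1 : -(‖Xa (u - ubar)‖ * ‖βu - βbar‖) ≤ ⟪Xa (u - ubar), βu - βbar⟫_ℝ := by
          have := abs_real_inner_le_norm (Xa (u - ubar)) (βu - βbar)
          have habs := neg_abs_le ⟪Xa (u - ubar), βu - βbar⟫_ℝ
          linarith
        have hK : 2*τ*(‖Xa (u - ubar)‖^2/(2*τ)) = ‖Xa (u - ubar)‖^2 := by field_simp
        nlinarith [sq_nonneg (‖Xa (u - ubar)‖ - τ * ‖βu - βbar‖), mul_pos hτ hτ]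
      have hb2 : ⟪u - ubar, yu - ybar⟫_ℝ
          ≤ (ι/2) * ‖yu - ybar‖^2 + ‖u - ubar‖^2/(2*ι) := by
        have h1 : ⟪u - ubar, yu - ybar⟫_ℝ ≤ ‖u - ubar‖ * ‖yu - ybar‖ :=
          real_inner_le_norm (u - ubar) (yu - ybar)
        have hK : 2*ι*(‖u - ubar‖^2/(2*ι)) = ‖u - ubar‖^2 := by field_simp
        nlinarith [sq_nonneg (‖u - ubar‖ - ι * ‖yu - ybar‖), mul_pos hι hι]
      have hφu : φ u = Cv - L u βu yu := hφL u
      have hcmp := hubar u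
      -- combine
      rw [hφu, hφub] at hcmp
      -- hcmp : Cv - L ubar βbar ybar ≤ Cv - L u βu yu
      have hLle : L u βu yu ≤ L ubar βbar ybar := by linarith
      rw [hshift, hinner] at hLle
      clear_value βu yu c₀ L Xa cu du Ee Cv
      linarith only [hlow, hb1, hb2, hLle]
    -- specialize to u = ubar + t • c₀
    have hsmall : ∀ t : ℝ, 0 < t → t < 1 →
        -(t * (2 * (‖Xa c₀‖^2/(2*τ) + ‖c₀‖^2/(2*ι))) / 2) ≤ -‖c₀‖^2 := by
      intro t ht0 ht1
      have hk := hkey (ubar + t • c₀)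
      have e3 : ubar + t • c₀ - ubar = t • c₀ := by abel
      rw [e3] at hk
      rw [real_inner_smul_left, map_smul, norm_smul, norm_smul] at hk
      simp only [Real.norm_eq_abs, mul_pow, sq_abs, real_inner_self_eq_norm_sq] at hk
      -- hk : t * ‖c₀‖^2 ≤ t^2‖Xa c₀‖^2/(2τ) + t^2‖c₀‖^2/(2ι)
      have hstep : t * ‖c₀‖^2 ≤ t * (t * (‖Xa c₀‖^2/(2*τ) + ‖c₀‖^2/(2*ι))) := by
        calc t * ‖c₀‖^2 ≤ t^2 * ‖Xa c₀‖^2/(2*τ) + t^2 * ‖c₀‖^2/(2*ι) := hk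
          _ = t * (t * (‖Xa c₀‖^2/(2*τ) + ‖c₀‖^2/(2*ι))) := by ring
      have hdiv := le_of_mul_le_mul_left hstep ht0
      linarith only [hdiv]
    have h0 : (0:ℝ) ≤ -‖c₀‖^2 := by
      apply nonneg_of_small_t' _ _ _ hsmall
      positivity
    have : ‖c₀‖^2 = 0 := le_antisymm (by linarith) (sq_nonneg _)
    have : ‖c₀‖ = 0 := by
      nlinarith [norm_nonneg c₀]
    exact norm_eq_zero.mp this
  refine ⟨hfeas, ?_⟩
  intro β y hxy
  have h1 := hgrow ubar β y
  rw [← hβbar, ← hybar] at h1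
  have h2 : L ubar β y = P β y := by
    simp only [hL, hxy, inner_zero_right, add_zero]
  have h3 : L ubar βbar ybar = P βbar ybar := by
    simp only [hL, hfeas, inner_zero_right, add_zero]
  clear_value L
  linarith only [h1, h2, h3,
    mul_nonneg (by positivity : (0:ℝ) ≤ τ/2) (sq_nonneg ‖β - βbar‖),
    mul_nonneg (by positivity : (0:ℝ) ≤ ι/2) (sq_nonneg ‖y - ybar‖)]
end

section
/- Let β̄ ∈ R^p and g(β) = h(Xβ − b) + λq₁(β) − q₂(β), where h and q₁ are convex (hence g is locally Lipschitz and directionally differentiable when q₂ is differentiable). Then β̄ is a d-stationary point of g (i.e., g′(β̄; v) ≥ 0 for all v) if and only if for some (equivalently, for all) τ, ι ≥ 0, β̄ is a global minimizer of β ↦ h(Xβ − b) + λq₁(β) − q₂(β̄) − ⟨∇q₂(β̄), β − β̄⟩ + (τ/2)‖β − β̄‖² + (ι/2)‖X(β − β̄)‖². -/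
/-!
Subtracting from `g` the linearization of `q₂` at `β̄` leaves the convex function
`M β = h(Xβ - b) + λ q₁ β - q₂ β̄ - ⟪∇q₂(β̄), β - β̄⟫`, whose one-sided directional derivatives
at `β̄` are those of `g`, because the remainder `q₂ β - q₂ β̄ - ⟪∇q₂(β̄), β - β̄⟫` has derivative
`0` there. For a convex function, nonnegative directional derivatives at a point are equivalent to
global minimality there, since difference quotients along a segment are bounded by the chord
slope. Adding a nonnegative penalty that is quadratic in `β - β̄` changes neither property: along
a ray it only adds `O(t)` to the difference quotients.
-/

open Filter Topology Set
open scoped InnerProductSpace RealInnerProductSpace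

section RightLineDeriv

variable {E : Type*} [AddCommGroup E] [Module ℝ E]

def HasRightLineDerivAt (f : E → ℝ) (f' : ℝ) (x v : E) : Prop :=
  Tendsto (fun t : ℝ => (f (x + t • v) - f x) / t) (𝓝[>] 0) (𝓝 f')

theorem HasRightLineDerivAt.add {f g : E → ℝ} {f' g' : ℝ} {x v : E}
    (hf : HasRightLineDerivAt f f' x v) (hg : HasRightLineDerivAt g g' x v) :
    HasRightLineDerivAt (f + g) (f' + g') x v := by
  refine (Tendsto.add hf hg).congr fun t => ?_
  simp only [Pi.add_apply]
  ring

theorem ConvexOn.le_sub_of_hasRightLineDerivAt {f : E → ℝ} {f' : ℝ} {x v : E}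
    (hf : ConvexOn ℝ univ f) (hd : HasRightLineDerivAt f f' x v) :
    f' ≤ f (x + v) - f x := by
  refine le_of_tendsto hd ?_
  filter_upwards [Ioc_mem_nhdsGT one_pos] with t ⟨ht0, ht1⟩
  have hchord : f (x + t • v) ≤ (1 - t) * f x + t * f (x + v) := by
    have hseg : x + t • v = (1 - t) • x + t • (x + v) := by module
    rw [hseg]
    exact hf.2 (mem_univ _) (mem_univ _) (by linarith) ht0.le (by ring)
  rw [div_le_iff₀ ht0]
  linarith

theorem HasRightLineDerivAt.nonneg_of_forall_le_add_sq {f : E → ℝ} {f' : ℝ} {x v : E}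
    (hd : HasRightLineDerivAt f f' x v) (C : ℝ)
    (hle : ∀ t : ℝ, 0 < t → f x ≤ f (x + t • v) + t ^ 2 * C) : 0 ≤ f' := by
  have hlim : Tendsto (fun t : ℝ => (f (x + t • v) - f x) / t + t * C) (𝓝[>] 0) (𝓝 f') := by
    simpa using Tendsto.add hd ((tendsto_nhdsWithin_of_tendsto_nhds tendsto_id).mul_const C)
  refine ge_of_tendsto hlim ?_
  filter_upwards [self_mem_nhdsWithin] with t (ht : 0 < t)
  have hquot : (f (x + t • v) - f x) / t + t * C = (f (x + t • v) + t ^ 2 * C - f x) / t := by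
    field_simp
    ring
  rw [hquot]
  exact div_nonneg (by linarith [hle t ht]) ht.le

theorem ConvexOn.forall_nonneg_iff_forall_le_add {f : E → ℝ} {f' : E → ℝ} {x : E}
    (hf : ConvexOn ℝ univ f) (hd : ∀ v, HasRightLineDerivAt f (f' v) x v)
    {P : E → ℝ} (hP_nonneg : ∀ v, 0 ≤ P v) (hP_smul : ∀ (t : ℝ) v, P (t • v) = t ^ 2 * P v) :
    (∀ v, 0 ≤ f' v) ↔ ∀ y, f x ≤ f y + P (y - x) := by
  refine ⟨fun hf' y => ?_, fun hle v => (hd v).nonneg_of_forall_le_add_sq (P v) fun t _ => ?_⟩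
  · have hchord := hf.le_sub_of_hasRightLineDerivAt (hd (y - x))
    rw [add_sub_cancel] at hchord
    linarith [hf' (y - x), hP_nonneg (y - x)]
  · simpa [hP_smul] using hle (x + t • v)

end RightLineDeriv

theorem HasLineDerivAt.hasRightLineDerivAt {E : Type*} [NormedAddCommGroup E] [NormedSpace ℝ E]
    {f : E → ℝ} {f' : ℝ} {x v : E} (hf : HasLineDerivAt ℝ f f' x v) :
    HasRightLineDerivAt f f' x v := by
  refine hf.tendsto_slope_zero_right.congr fun t => ?_
  rw [smul_eq_mul, inv_mul_eq_div]

theorem HasGradientAt.hasRightLineDerivAt_sub_inner {E : Type*} [NormedAddCommGroup E]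
    [InnerProductSpace ℝ E] [CompleteSpace E] {f : E → ℝ} {g x : E} (hf : HasGradientAt f g x)
    (v : E) : HasRightLineDerivAt (fun y => f y - f x - ⟪g, y - x⟫_ℝ) 0 x v := by
  have := (hf.hasFDerivAt.sub_const (f x)).fun_sub ((innerSL ℝ g).hasFDerivAt.sub_const ⟪g, x⟫_ℝ)
  exact HasLineDerivAt.hasRightLineDerivAt (by simpa [inner_sub_right] using this.hasLineDerivAt v)

theorem ConvexOn.comp_linearMap_sub {E F : Type*} [AddCommGroup E] [Module ℝ E]
    [AddCommGroup F] [Module ℝ F] {f : F → ℝ} (hf : ConvexOn ℝ univ f) (A : E →ₗ[ℝ] F) (b : F) :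
    ConvexOn ℝ univ (fun x => f (A x - b)) :=
  (hf.comp_affineMap (A.toAffineMap - AffineMap.const ℝ E b)).congr fun x _ => by simp

theorem ConvexOn.sub_const_sub_inner {E : Type*} [NormedAddCommGroup E] [InnerProductSpace ℝ E]
    {f : E → ℝ} (hf : ConvexOn ℝ univ f) (c : ℝ) (g x : E) :
    ConvexOn ℝ univ (fun y => f y - c - ⟪g, y - x⟫_ℝ) := by
  refine (hf.add ((innerₛₗ ℝ g).concaveOn convex_univ).neg).add_const (⟪g, x⟫_ℝ - c) |>.congr
    fun y _ => ?_
  simp only [Pi.add_apply, Pi.neg_apply, innerₛₗ_apply_apply, inner_sub_right]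
  ring

theorem dstationary_iff_majorized_minimizer_general {n p : ℕ}
    (X : EuclideanSpace ℝ (Fin p) →L[ℝ] EuclideanSpace ℝ (Fin n))
    (b : EuclideanSpace ℝ (Fin n))
    (h : EuclideanSpace ℝ (Fin n) → ℝ) (hh_conv : ConvexOn ℝ Set.univ h)
    (q₁ q₂ : EuclideanSpace ℝ (Fin p) → ℝ)
    (hq₁ : ConvexOn ℝ Set.univ q₁)
    (lam : ℝ) (hlam : 0 ≤ lam)
    (g : EuclideanSpace ℝ (Fin p) → ℝ)
    (hg : ∀ β, g β = h (X β - b) + lam * q₁ β - q₂ β)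
    (βbar : EuclideanSpace ℝ (Fin p))
    (gq : EuclideanSpace ℝ (Fin p)) (hgq : HasGradientAt q₂ gq βbar)
    (dg : EuclideanSpace ℝ (Fin p) → ℝ)
    (hdg : ∀ v, Tendsto (fun t : ℝ => (g (βbar + t • v) - g βbar) / t)
        (𝓝[>] (0 : ℝ)) (𝓝 (dg v))) :
    ((∀ v, 0 ≤ dg v) ↔
      (∃ τ ι : ℝ, 0 ≤ τ ∧ 0 ≤ ι ∧ ∀ β,
        h (X βbar - b) + lam * q₁ βbar - q₂ βbar ≤
          h (X β - b) + lam * q₁ β - q₂ βbar - ⟪gq, β - βbar⟫_ℝ +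
            (τ / 2) * ‖β - βbar‖ ^ 2 + (ι / 2) * ‖X (β - βbar)‖ ^ 2)) ∧
    ((∀ v, 0 ≤ dg v) ↔
      (∀ τ ι : ℝ, 0 ≤ τ → 0 ≤ ι → ∀ β,
        h (X βbar - b) + lam * q₁ βbar - q₂ βbar ≤
          h (X β - b) + lam * q₁ β - q₂ βbar - ⟪gq, β - βbar⟫_ℝ +
            (τ / 2) * ‖β - βbar‖ ^ 2 + (ι / 2) * ‖X (β - βbar)‖ ^ 2)) := by
  set M := fun β => h (X β - b) + lam * q₁ β - q₂ βbar - ⟪gq, β - βbar⟫_ℝ with hM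
  have hM_conv : ConvexOn ℝ univ M :=
    ((hh_conv.comp_linearMap_sub X.toLinearMap b).add (hq₁.smul hlam)).sub_const_sub_inner
      (q₂ βbar) gq βbar
  have hM_eq : M = g + fun β => q₂ β - q₂ βbar - ⟪gq, β - βbar⟫_ℝ := by
    ext β
    simp only [hM, Pi.add_apply, hg]
    ring
  have hM_deriv : ∀ v, HasRightLineDerivAt M (dg v) βbar v := fun v => by
    simpa [hM_eq] using HasRightLineDerivAt.add (hdg v) (hgq.hasRightLineDerivAt_sub_inner v)
  have key : ∀ τ ι : ℝ, 0 ≤ τ → 0 ≤ ι → ((∀ v, 0 ≤ dg v) ↔ ∀ β,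
      M βbar ≤ M β + ((τ / 2) * ‖β - βbar‖ ^ 2 + (ι / 2) * ‖X (β - βbar)‖ ^ 2)) :=
    fun τ ι hτ hι => hM_conv.forall_nonneg_iff_forall_le_add hM_deriv
      (P := fun w => (τ / 2) * ‖w‖ ^ 2 + (ι / 2) * ‖X w‖ ^ 2) (fun w => by positivity)
      fun t w => by simp only [map_smul, norm_smul, mul_pow, Real.norm_eq_abs, sq_abs]; ring
  simp only [hM, sub_self, inner_zero_right, sub_zero, ← add_assoc] at key
  exact ⟨⟨fun hd => ⟨0, 0, le_rfl, le_rfl, (key 0 0 le_rfl le_rfl).1 hd⟩,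
      fun ⟨τ, ι, hτ, hι, hmin⟩ => (key τ ι hτ hι).2 hmin⟩,
    ⟨fun hd τ ι hτ hι => (key τ ι hτ hι).1 hd,
      fun hmin => (key 0 0 le_rfl le_rfl).2 (hmin 0 0 le_rfl le_rfl)⟩⟩

/-- `β̄` is a d-stationary point of `g` iff for some (equivalently, for
all) `τ, ι ≥ 0`, `β̄` globally minimizes the majorized convex model
`β ↦ h(Xβ - b) + λq₁(β) - q₂(β̄) - ⟪∇q₂(β̄), β - β̄⟫ + (τ/2)‖β - β̄‖² + (ι/2)‖X(β - β̄)‖²`. -/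
theorem dstationary_iff_majorized_minimizer {n p : ℕ}
    (X : EuclideanSpace ℝ (Fin p) →L[ℝ] EuclideanSpace ℝ (Fin n))
    (b : EuclideanSpace ℝ (Fin n))
    (h : EuclideanSpace ℝ (Fin n) → ℝ) (hh_conv : ConvexOn ℝ Set.univ h)
    (q₁ q₂ : EuclideanSpace ℝ (Fin p) → ℝ)
    (hq₁ : ConvexOn ℝ Set.univ q₁) (hq₂ : ConvexOn ℝ Set.univ q₂)
    (lam : ℝ) (hlam : 0 ≤ lam)
    (g : EuclideanSpace ℝ (Fin p) → ℝ)
    (hg : ∀ β, g β = h (X β - b) + lam * q₁ β - q₂ β)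
    (βbar : EuclideanSpace ℝ (Fin p))
    (gq : EuclideanSpace ℝ (Fin p)) (hgq : HasGradientAt q₂ gq βbar)
    (dg : EuclideanSpace ℝ (Fin p) → ℝ)
    (hdg : ∀ v, Tendsto (fun t : ℝ => (g (βbar + t • v) - g βbar) / t)
        (𝓝[>] (0 : ℝ)) (𝓝 (dg v))) :
    ((∀ v, 0 ≤ dg v) ↔
      (∃ τ ι : ℝ, 0 ≤ τ ∧ 0 ≤ ι ∧ ∀ β,
        h (X βbar - b) + lam * q₁ βbar - q₂ βbar ≤
          h (X β - b) + lam * q₁ β - q₂ βbar - ⟪gq, β - βbar⟫_ℝ +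
            (τ / 2) * ‖β - βbar‖ ^ 2 + (ι / 2) * ‖X (β - βbar)‖ ^ 2)) ∧
    ((∀ v, 0 ≤ dg v) ↔
      (∀ τ ι : ℝ, 0 ≤ τ → 0 ≤ ι → ∀ β,
        h (X βbar - b) + lam * q₁ βbar - q₂ βbar ≤
          h (X β - b) + lam * q₁ β - q₂ βbar - ⟪gq, β - βbar⟫_ℝ +
            (τ / 2) * ‖β - βbar‖ ^ 2 + (ι / 2) * ‖X (β - βbar)‖ ^ 2)) :=
  dstationary_iff_majorized_minimizer_general X b h hh_conv q₁ q₂ hq₁ lam hlam g hg βbar gq hgq dg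
    hdg
end

section
/- Boundedness of the preconditioned PPA sequence: let f be proper lsc convex with Ω := {x : 0 ∈ ∂f(x)} ≠ ∅, let {M_k} be symmetric positive definite matrices with (1+ρ_k)M_k ⪰ M_{k+1}, M_k ⪰ λ_min·I, Σρ_k < ∞, and let x^{k+1} satisfy ‖x^{k+1} − x̄^{k+1}‖_{M_k} ≤ ε_k with Σε_k < ∞, where x̄^{k+1} = argmin_x { f(x) + (1/(2σ_k))‖x − x^k‖²_{M_k} }. Then dist_{M_{k+1}}(x^{k+1}, Ω) ≤ (1+ρ_k)·dist_{M_k}(x^k, Ω) + (1+ρ_k)ε_k for all k, and the sequence {x^k} is bounded. -/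
open scoped InnerProductSpace RealInnerProductSpace

/-!
Write `‖v‖_N = √⟪v, N v⟫` for a positive operator `N`. If `x̄` minimizes
`f + c ‖· - x‖_N²` and `z` minimizes `f`, then `‖z - x̄‖_N ≤ ‖z - x‖_N`: moving from `x̄`
towards `z` does not increase `f`, so first-order optimality of `x̄` gives
`⟪x̄ - x, N (z - x̄)⟫ ≥ 0`. The inexact step costs `ε_k` by the triangle inequality for `‖·‖_N`,
and passing from `M_k` to `M_{k+1}` costs the factor `√(1 + ρ_k) ≤ 1 + ρ_k`. Hence
`a_k = ‖z - x^k‖_{M_k}` satisfies `a_{k+1} ≤ (1 + ρ_k) (a_k + ε_k)`, which gives the distance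
estimate after taking the infimum over `z` and keeps `a_k ≤ exp (∑ ρ) (a_0 + ∑ ε)`; finally
`M_k ⪰ λ_min` turns this into a bound on `‖z - x^k‖`.
-/

open Real Set Filter Topology

theorem nonneg_of_forall_mem_Ioc_nonneg_add_mul {a b : ℝ}
    (h : ∀ t ∈ Ioc (0 : ℝ) 1, 0 ≤ a + t * b) : 0 ≤ a := by
  have hlim : Tendsto (fun t => a + t * b) (𝓝[>] 0) (𝓝 a) := by
    have : Continuous fun t : ℝ => a + t * b := by fun_prop
    simpa using (this.tendsto 0).mono_left nhdsWithin_le_nhds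
  exact ge_of_tendsto hlim (mem_of_superset (Ioc_mem_nhdsGT zero_lt_one) h)

theorem sqrt_le_mul_sqrt_of_le_mul {p q a : ℝ} (ha : 1 ≤ a) (hq : 0 ≤ q) (h : p ≤ a * q) :
    √p ≤ a * √q := by
  rw [sqrt_le_left (mul_nonneg (by linarith) (sqrt_nonneg q)), mul_pow, sq_sqrt hq]
  nlinarith [mul_nonneg (mul_nonneg (by linarith : 0 ≤ a) (by linarith : 0 ≤ a - 1)) hq]

theorem ciInf_le_mul_ciInf_add {ι : Type*} [Nonempty ι] {g h : ι → ℝ} {a b : ℝ} (ha : 0 < a)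
    (hg : BddBelow (range g)) (hgh : ∀ i, g i ≤ a * h i + b) : ⨅ i, g i ≤ a * (⨅ i, h i) + b := by
  have : ((⨅ i, g i) - b) / a ≤ ⨅ i, h i := le_ciInf fun i => by
    rw [div_le_iff₀' ha]
    linarith [ciInf_le hg i, hgh i]
  rw [div_le_iff₀' ha] at this
  linarith

section Recursion

variable {a ρ ε : ℕ → ℝ}

theorem le_prod_mul_add_sum_of_le_one_add_mul (hρ : ∀ k, 0 ≤ ρ k) (hε : ∀ k, 0 ≤ ε k)
    (h : ∀ k, a (k + 1) ≤ (1 + ρ k) * (a k + ε k)) (k : ℕ) :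
    a k ≤ (∏ j ∈ Finset.range k, (1 + ρ j)) * (a 0 + ∑ j ∈ Finset.range k, ε j) := by
  induction k with
  | zero => simp
  | succ k ih =>
    have hP : 1 ≤ ∏ j ∈ Finset.range k, (1 + ρ j) :=
      Finset.one_le_prod fun j _ => le_add_of_nonneg_right (hρ j)
    rw [Finset.prod_range_succ, Finset.sum_range_succ]
    calc a (k + 1) ≤ (1 + ρ k) * (a k + ε k) := h k
      _ ≤ (1 + ρ k) * ((∏ j ∈ Finset.range k, (1 + ρ j)) * (a 0 + ∑ j ∈ Finset.range k, ε j)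
            + (∏ j ∈ Finset.range k, (1 + ρ j)) * ε k) := by
        gcongr
        · linarith [hρ k]
        · exact le_mul_of_one_le_left (hε k) hP
      _ = _ := by ring

theorem bddAbove_range_of_le_one_add_mul (ha : 0 ≤ a 0) (hρ : ∀ k, 0 ≤ ρ k) (hρs : Summable ρ)
    (hε : ∀ k, 0 ≤ ε k) (hεs : Summable ε) (h : ∀ k, a (k + 1) ≤ (1 + ρ k) * (a k + ε k)) :
    BddAbove (range a) := by
  refine ⟨exp (∑' j, ρ j) * (a 0 + ∑' j, ε j), forall_mem_range.2 fun k => ?_⟩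
  refine (le_prod_mul_add_sum_of_le_one_add_mul hρ hε h k).trans
    (mul_le_mul ?_ ?_ (add_nonneg ha (Finset.sum_nonneg fun j _ => hε j)) (exp_nonneg _))
  · exact (prod_one_add_le_exp_sum _ hρ).trans
      (exp_le_exp.2 (hρs.sum_le_tsum _ fun j _ => hρ j))
  · gcongr
    exact hεs.sum_le_tsum _ fun j _ => hε j

end Recursion

variable {E : Type*} [NormedAddCommGroup E] [InnerProductSpace ℝ E] {N : E →L[ℝ] E}

theorem LinearMap.IsSymmetric.inner_add_smul_apply_add_smul (hN : (N : E →ₗ[ℝ] E).IsSymmetric)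
    (v w : E) (t : ℝ) :
    ⟪v + t • w, N (v + t • w)⟫ = ⟪v, N v⟫ + 2 * t * ⟪v, N w⟫ + t ^ 2 * ⟪w, N w⟫ := by
  have hwv : ⟪w, N v⟫ = ⟪v, N w⟫ := by rw [real_inner_comm]; exact hN v w
  simp only [map_add, map_smul, inner_add_left, inner_add_right, real_inner_smul_left,
    real_inner_smul_right, hwv]
  ring

namespace ContinuousLinearMap.IsPositive

theorem inner_apply_le_sqrt_mul_sqrt (hN : N.IsPositive) (v w : E) : ⟪v, N w⟫ ≤ √⟪v, N v⟫ * √⟪w, N w⟫ := by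
  have hdisc : discrim ⟪w, N w⟫ (2 * ⟪v, N w⟫) ⟪v, N v⟫ ≤ 0 := discrim_le_zero fun t => by
    have := hN.inner_nonneg_right (v + t • w)
    rw [hN.isSymmetric.inner_add_smul_apply_add_smul] at this
    linear_combination this
  calc ⟪v, N w⟫ ≤ |⟪v, N w⟫| := le_abs_self _
    _ ≤ √(⟪v, N v⟫ * ⟪w, N w⟫) := abs_le_sqrt (by rw [discrim] at hdisc; linarith)
    _ = √⟪v, N v⟫ * √⟪w, N w⟫ := sqrt_mul (hN.inner_nonneg_right v) _

theorem sqrt_inner_add_apply_add_le (hN : N.IsPositive) (v w : E) :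
    √⟪v + w, N (v + w)⟫ ≤ √⟪v, N v⟫ + √⟪w, N w⟫ := by
  have hvw := hN.isSymmetric.inner_add_smul_apply_add_smul v w 1
  rw [one_smul] at hvw
  rw [sqrt_le_left (by positivity), add_sq, sq_sqrt (hN.inner_nonneg_right v),
    sq_sqrt (hN.inner_nonneg_right w), hvw]
  linarith [hN.inner_apply_le_sqrt_mul_sqrt v w]

end ContinuousLinearMap.IsPositive

theorem ConvexOn.inner_apply_nonneg_of_isMinOn {f : E → ℝ} (hf : ConvexOn ℝ univ f)
    (hN : (N : E →ₗ[ℝ] E).IsSymmetric) {c : ℝ} (hc : 0 < c) {x xb z : E}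
    (hxb : IsMinOn (fun y => f y + c * ⟪y - x, N (y - x)⟫) univ xb) (hz : f z ≤ f xb) :
    0 ≤ ⟪xb - x, N (z - xb)⟫ := by
  suffices h : 0 ≤ 2 * ⟪xb - x, N (z - xb)⟫ by linarith
  refine nonneg_of_forall_mem_Ioc_nonneg_add_mul (b := ⟪z - xb, N (z - xb)⟫) fun t ⟨ht0, ht1⟩ => ?_
  have hseg : f (xb + t • (z - xb)) ≤ f xb := by
    have := hf.le_on_segment' (mem_univ xb) (mem_univ z) (sub_nonneg.2 ht1) ht0.le
      (sub_add_cancel 1 t)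
    rwa [max_eq_left hz, show (1 - t) • xb + t • z = xb + t • (z - xb) by module] at this
  have hmin := isMinOn_univ_iff.mp hxb (xb + t • (z - xb))
  rw [show xb + t • (z - xb) - x = (xb - x) + t • (z - xb) by abel,
    hN.inner_add_smul_apply_add_smul] at hmin
  have : 0 ≤ (c * t) * (2 * ⟪xb - x, N (z - xb)⟫ + t * ⟪z - xb, N (z - xb)⟫) := by
    nlinarith
  exact nonneg_of_mul_nonneg_right this (mul_pos hc ht0)

theorem ConvexOn.inner_apply_sub_le_of_isMinOn {f : E → ℝ} (hf : ConvexOn ℝ univ f)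
    (hN : N.IsPositive) {c : ℝ} (hc : 0 < c) {x xb z : E}
    (hxb : IsMinOn (fun y => f y + c * ⟪y - x, N (y - x)⟫) univ xb) (hz : f z ≤ f xb) :
    ⟪z - xb, N (z - xb)⟫ ≤ ⟪z - x, N (z - x)⟫ := by
  have hfirst := hf.inner_apply_nonneg_of_isMinOn hN.isSymmetric hc hxb hz
  have hsplit := hN.isSymmetric.inner_add_smul_apply_add_smul (z - xb) (xb - x) 1
  rw [one_smul, sub_add_sub_cancel] at hsplit
  have hswap : ⟪z - xb, N (xb - x)⟫ = ⟪xb - x, N (z - xb)⟫ :=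
    (real_inner_comm _ _).trans (hN.inner_left_eq_inner_right _ _)
  linarith [hN.inner_nonneg_right (xb - x)]

theorem ConvexOn.sqrt_inner_apply_sub_le_of_isMinOn {f : E → ℝ} (hf : ConvexOn ℝ univ f)
    {N' : E →L[ℝ] E} (hN : N.IsPositive) {r : ℝ} (hr : 0 ≤ r)
    (hN' : ∀ v, ⟪v, N' v⟫ ≤ (1 + r) * ⟪v, N v⟫) {c e : ℝ} (hc : 0 < c) {x xb x' z : E}
    (hxb : IsMinOn (fun y => f y + c * √⟪y - x, N (y - x)⟫ ^ 2) univ xb)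
    (hx' : √⟪x' - xb, N (x' - xb)⟫ ≤ e) (hz : ∀ y, f z ≤ f y) :
    √⟪z - x', N' (z - x')⟫ ≤ (1 + r) * (√⟪z - x, N (z - x)⟫ + e) := by
  have hsq : ∀ v, √⟪v, N v⟫ ^ 2 = ⟪v, N v⟫ := fun v => sq_sqrt (hN.inner_nonneg_right v)
  have hprox := hf.inner_apply_sub_le_of_isMinOn hN hc (by simpa only [hsq] using hxb) (hz xb)
  have hneg : √⟪xb - x', N (xb - x')⟫ = √⟪x' - xb, N (x' - xb)⟫ := by
    rw [← neg_sub, map_neg, inner_neg_left, inner_neg_right, neg_neg]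
  calc √⟪z - x', N' (z - x')⟫ ≤ (1 + r) * √⟪z - x', N (z - x')⟫ :=
        sqrt_le_mul_sqrt_of_le_mul (le_add_of_nonneg_right hr) (hN.inner_nonneg_right _) (hN' _)
    _ ≤ (1 + r) * (√⟪z - xb, N (z - xb)⟫ + √⟪xb - x', N (xb - x')⟫) := by
        gcongr
        simpa only [sub_add_sub_cancel] using hN.sqrt_inner_add_apply_add_le (z - xb) (xb - x')
    _ ≤ (1 + r) * (√⟪z - x, N (z - x)⟫ + e) := by
        gcongr
        rwa [hneg]

theorem preconditioned_ppa_bounded_general {n : ℕ}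
    (f : EuclideanSpace ℝ (Fin n) → ℝ)
    (hf_conv : ConvexOn ℝ Set.univ f)
    (Ω : Set (EuclideanSpace ℝ (Fin n)))
    (hΩ : Ω = {z | ∀ y, f z ≤ f y}) (hΩne : Ω.Nonempty)
    (σ : ℕ → ℝ) (hσ : ∀ k, 0 < σ k)
    (ρ : ℕ → ℝ) (hρ : ∀ k, 0 ≤ ρ k) (hρsum : Summable ρ)
    (ε : ℕ → ℝ) (hεsum : Summable ε)
    (lammin : ℝ) (hlammin : 0 < lammin)
    (M : ℕ → (EuclideanSpace ℝ (Fin n) →L[ℝ] EuclideanSpace ℝ (Fin n)))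
    (hM_sym : ∀ k, ∀ v w, ⟪M k v, w⟫_ℝ = ⟪v, M k w⟫_ℝ)
    (hM_lb : ∀ k, ∀ v, lammin * ‖v‖ ^ 2 ≤ ⟪v, M k v⟫_ℝ)
    (hM_dec : ∀ k, ∀ v, ⟪v, M (k + 1) v⟫_ℝ ≤ (1 + ρ k) * ⟪v, M k v⟫_ℝ)
    (nM : ℕ → EuclideanSpace ℝ (Fin n) → ℝ)
    (hnM : ∀ k v, nM k v = Real.sqrt ⟪v, M k v⟫_ℝ)
    (distM : ℕ → EuclideanSpace ℝ (Fin n) → ℝ)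
    (hdistM : ∀ k x, distM k x = ⨅ y : Ω, nM k ((y : EuclideanSpace ℝ (Fin n)) - x))
    (x xbar : ℕ → EuclideanSpace ℝ (Fin n))
    (hxbar : ∀ k, IsMinOn
      (fun z => f z + (1 / (2 * σ k)) * (nM k (z - x k)) ^ 2) Set.univ (xbar (k + 1)))
    (happrox : ∀ k, nM k (x (k + 1) - xbar (k + 1)) ≤ ε k) :
    (∀ k, distM (k + 1) (x (k + 1)) ≤ (1 + ρ k) * distM k (x k) + (1 + ρ k) * ε k) ∧
      Bornology.IsBounded (Set.range x) := by
  subst hΩ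
  simp only [hnM] at hdistM hxbar happrox
  have hpos : ∀ k, (M k).IsPositive := fun k => (ContinuousLinearMap.isPositive_iff _).2
    ⟨hM_sym k, fun v => hM_sym k v v ▸ (mul_nonneg hlammin.le (sq_nonneg _)).trans (hM_lb k v)⟩
  have hε : ∀ k, 0 ≤ ε k := fun k => (sqrt_nonneg _).trans (happrox k)
  have hstep (k : ℕ) (z : EuclideanSpace ℝ (Fin n)) (hz : ∀ y, f z ≤ f y) :=
    hf_conv.sqrt_inner_apply_sub_le_of_isMinOn (hpos k) (hρ k) (hM_dec k)
      (one_div_pos.2 (mul_pos two_pos (hσ k))) (hxbar k) (happrox k) hz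
  have := hΩne.to_subtype
  refine ⟨fun k => ?_, ?_⟩
  · rw [hdistM, hdistM]
    exact ciInf_le_mul_ciInf_add (by linarith [hρ k])
      ⟨0, forall_mem_range.2 fun _ => sqrt_nonneg _⟩ fun y => by linarith [hstep k y y.2]
  · obtain ⟨z, hz⟩ := hΩne
    obtain ⟨C, hC⟩ := bddAbove_range_of_le_one_add_mul
      (a := fun k => √⟪z - x k, M k (z - x k)⟫) (sqrt_nonneg _) hρ hρsum hε hεsum
      fun k => hstep k z hz
    refine (Metric.isBounded_closedBall (x := z) (r := C / √lammin)).subset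
      (range_subset_iff.2 fun k => ?_)
    have hnorm : √lammin * ‖z - x k‖ ≤ √⟪z - x k, M k (z - x k)⟫ := by
      simpa [sqrt_mul hlammin.le, sqrt_sq (norm_nonneg _)] using sqrt_le_sqrt (hM_lb k (z - x k))
    rw [Metric.mem_closedBall', dist_eq_norm, le_div_iff₀ (sqrt_pos.2 hlammin), mul_comm]
    exact hnorm.trans (hC (mem_range_self k))

/-- boundedness of the preconditioned PPA sequence under criterion (A):
`dist_{M_{k+1}}(x^{k+1}, Ω) ≤ (1+ρ_k) dist_{M_k}(x^k, Ω) + (1+ρ_k) ε_k` and `{x^k}`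
is bounded. Here `Ω = (∂f)⁻¹(0)` is the (nonempty) set of minimizers of the convex
function `f`. -/
theorem preconditioned_ppa_bounded {n : ℕ}
    (f : EuclideanSpace ℝ (Fin n) → ℝ)
    (hf_conv : ConvexOn ℝ Set.univ f) (hf_lsc : LowerSemicontinuous f)
    (Ω : Set (EuclideanSpace ℝ (Fin n)))
    (hΩ : Ω = {z | ∀ y, f z ≤ f y}) (hΩne : Ω.Nonempty)
    (σ : ℕ → ℝ) (hσ : ∀ k, 0 < σ k) (hσmono : Monotone σ)
    (ρ : ℕ → ℝ) (hρ : ∀ k, 0 ≤ ρ k) (hρsum : Summable ρ)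
    (ε : ℕ → ℝ) (hε : ∀ k, 0 ≤ ε k) (hεsum : Summable ε)
    (lammin : ℝ) (hlammin : 0 < lammin)
    (M : ℕ → (EuclideanSpace ℝ (Fin n) →L[ℝ] EuclideanSpace ℝ (Fin n)))
    (hM_sym : ∀ k, ∀ v w, ⟪M k v, w⟫_ℝ = ⟪v, M k w⟫_ℝ)
    (hM_lb : ∀ k, ∀ v, lammin * ‖v‖ ^ 2 ≤ ⟪v, M k v⟫_ℝ)
    (hM_dec : ∀ k, ∀ v, ⟪v, M (k + 1) v⟫_ℝ ≤ (1 + ρ k) * ⟪v, M k v⟫_ℝ)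
    (nM : ℕ → EuclideanSpace ℝ (Fin n) → ℝ)
    (hnM : ∀ k v, nM k v = Real.sqrt ⟪v, M k v⟫_ℝ)
    (distM : ℕ → EuclideanSpace ℝ (Fin n) → ℝ)
    (hdistM : ∀ k x, distM k x = ⨅ y : Ω, nM k ((y : EuclideanSpace ℝ (Fin n)) - x))
    (x xbar : ℕ → EuclideanSpace ℝ (Fin n))
    (hxbar : ∀ k, IsMinOn
      (fun z => f z + (1 / (2 * σ k)) * (nM k (z - x k)) ^ 2) Set.univ (xbar (k + 1)))
    (happrox : ∀ k, nM k (x (k + 1) - xbar (k + 1)) ≤ ε k) :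
    (∀ k, distM (k + 1) (x (k + 1)) ≤ (1 + ρ k) * distM k (x k) + (1 + ρ k) * ε k) ∧
      Bornology.IsBounded (Set.range x) :=
  preconditioned_ppa_bounded_general f hf_conv Ω hΩ hΩne σ hσ ρ hρ hρsum ε hεsum lammin hlammin M
    hM_sym hM_lb hM_dec nM hnM distM hdistM x xbar hxbar happrox
end

section
/- Let D = {x ∈ R^n : x_1 ≥ x_2 ≥ ⋯ ≥ x_n} be the monotone nonincreasing cone and let P be a permutation matrix sorting x in nonincreasing order (Px = x↓). With w ∈ R^n defined by w_i = n − 2i + 1 and ρ = 1/(ι·n(n−1)), the proximal mapping of ι^{-1}h at x, where h(y) = (1/(n(n−1)))Σ_{1≤i<j≤n}|y_i − y_j|, equals Pᵀ·Π_D(x↓ − ρw), where Π_D is the Euclidean projection onto D. -/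
open Finset

/-- The Wilcoxon-type pairwise loss `h(y) = (1/(n(n-1))) Σ_{i<j} |y_i - y_j|`. -/
noncomputable def pairwiseLoss (n : ℕ) (y : Fin n → ℝ) : ℝ :=
  (1 / ((n : ℝ) * ((n : ℝ) - 1))) * ∑ i : Fin n, ∑ j ∈ Finset.Ioi i, |y i - y j|

section Aux

lemma swap_tri (n : ℕ) (g : Fin n → Fin n → ℝ) :
    ∑ i : Fin n, ∑ j ∈ Finset.Ioi i, g i j = ∑ j : Fin n, ∑ i ∈ Finset.Iio j, g i j := by
  rw [Finset.sum_sigma', Finset.sum_sigma']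
  refine Finset.sum_nbij' (fun p => ⟨p.2, p.1⟩) (fun p => ⟨p.2, p.1⟩) ?_ ?_ ?_ ?_ ?_ <;>
    simp [Finset.mem_sigma]

lemma univ_split (n : ℕ) (i : Fin n) (f : Fin n → ℝ) :
    ∑ j : Fin n, f j = ∑ j ∈ Finset.Iio i, f j + f i + ∑ j ∈ Finset.Ioi i, f j := by
  have h1 := Finset.sum_compl_add_sum ({i} : Finset (Fin n)) f
  have h2 : ∑ j ∈ ({i}ᶜ : Finset (Fin n)), f j
      = ∑ j ∈ Finset.Ioi i, f j + ∑ j ∈ Finset.Iio i, f j := by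
    rw [← Finset.sum_disjUnion (Finset.disjoint_Ioi_Iio i)]
    exact Finset.sum_congr (by ext j; simp [eq_comm]) (fun _ _ => rfl)
  rw [← h1, h2, Finset.sum_singleton]; ring

lemma double_sum_abs (n : ℕ) (y : Fin n → ℝ) :
    ∑ i : Fin n, ∑ j : Fin n, |y i - y j| =
      2 * ∑ i : Fin n, ∑ j ∈ Finset.Ioi i, |y i - y j| := by
  have h1 : ∑ i : Fin n, ∑ j : Fin n, |y i - y j|
      = ∑ i : Fin n, (∑ j ∈ Finset.Iio i, |y i - y j| + ∑ j ∈ Finset.Ioi i, |y i - y j|) := by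
    refine Finset.sum_congr rfl fun i _ => ?_
    rw [univ_split n i (fun j => |y i - y j|)]; simp
  have h2 : ∑ i : Fin n, ∑ j ∈ Finset.Iio i, |y i - y j|
      = ∑ i : Fin n, ∑ j ∈ Finset.Ioi i, |y i - y j| := by
    rw [show (∑ i : Fin n, ∑ j ∈ Finset.Iio i, |y i - y j|)
        = ∑ j : Fin n, ∑ i ∈ Finset.Iio j, |y j - y i| from rfl,
      ← swap_tri n (fun i j => |y j - y i|)]
    exact Finset.sum_congr rfl fun i _ => Finset.sum_congr rfl fun j _ => abs_sub_comm _ _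
  rw [h1, Finset.sum_add_distrib, h2]; ring

lemma pairwiseLoss_comp_perm (n : ℕ) (y : Fin n → ℝ) (σ : Equiv.Perm (Fin n)) :
    pairwiseLoss n (y ∘ σ) = pairwiseLoss n y := by
  unfold pairwiseLoss
  congr 1
  have hT : ∑ i : Fin n, ∑ j : Fin n, |y (σ i) - y (σ j)|
      = ∑ i : Fin n, ∑ j : Fin n, |y i - y j| := by
    calc ∑ i : Fin n, ∑ j : Fin n, |y (σ i) - y (σ j)|
        = ∑ i : Fin n, ∑ j : Fin n, |y (σ i) - y j| :=
          Finset.sum_congr rfl fun i _ => Equiv.sum_comp σ (fun j => |y (σ i) - y j|)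
      _ = ∑ i : Fin n, ∑ j : Fin n, |y i - y j| :=
          Equiv.sum_comp σ (fun i => ∑ j : Fin n, |y i - y j|)
  have h1 := double_sum_abs n (y ∘ σ)
  have h2 := double_sum_abs n y
  simp only [Function.comp_apply] at h1 ⊢
  linarith

lemma sum_abs_antitone (n : ℕ) (v : Fin n → ℝ) (hv : ∀ i j : Fin n, i ≤ j → v j ≤ v i) :
    ∑ i : Fin n, ∑ j ∈ Finset.Ioi i, |v i - v j| =
      ∑ i : Fin n, ((n : ℝ) - 2 * ((i : ℕ) : ℝ) - 1) * v i := by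
  have habs : ∀ i : Fin n, ∀ j ∈ Finset.Ioi i, |v i - v j| = v i - v j := by
    intro i j hj
    have := hv i j (le_of_lt (Finset.mem_Ioi.mp hj))
    rw [abs_of_nonneg]; linarith
  calc ∑ i : Fin n, ∑ j ∈ Finset.Ioi i, |v i - v j|
      = ∑ i : Fin n, ∑ j ∈ Finset.Ioi i, (v i - v j) :=
        Finset.sum_congr rfl fun i _ => Finset.sum_congr rfl (habs i)
    _ = ∑ i : Fin n, (((Finset.Ioi i).card : ℝ) * v i) - ∑ i : Fin n, ∑ j ∈ Finset.Ioi i, v j := by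
        rw [← Finset.sum_sub_distrib]
        refine Finset.sum_congr rfl fun i _ => ?_
        rw [Finset.sum_sub_distrib, Finset.sum_const, nsmul_eq_mul]
    _ = ∑ i : Fin n, (((Finset.Ioi i).card : ℝ) * v i)
          - ∑ j : Fin n, (((Finset.Iio j).card : ℝ) * v j) := by
        rw [swap_tri n (fun _ j => v j)]
        congr 1
        refine Finset.sum_congr rfl fun j _ => ?_
        rw [Finset.sum_const, nsmul_eq_mul]
    _ = ∑ i : Fin n, ((((Finset.Ioi i).card : ℝ) - ((Finset.Iio i).card : ℝ)) * v i) := by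
        rw [← Finset.sum_sub_distrib]
        exact Finset.sum_congr rfl fun i _ => by ring
    _ = ∑ i : Fin n, ((n : ℝ) - 2 * ((i : ℕ) : ℝ) - 1) * v i := by
        refine Finset.sum_congr rfl fun i _ => ?_
        have hi : (i : ℕ) < n := i.isLt
        have h1 : ((Finset.Ioi i).card : ℝ) = (n : ℝ) - ((i : ℕ) : ℝ) - 1 := by
          rw [Fin.card_Ioi i, show n - 1 - (i : ℕ) = n - ((i : ℕ) + 1) by omega,
            Nat.cast_sub (by omega : (i : ℕ) + 1 ≤ n)]
          push_cast; ring
        have h2 : ((Finset.Iio i).card : ℝ) = ((i : ℕ) : ℝ) := by rw [Fin.card_Iio i]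
        rw [h1, h2]; ring

lemma sum_sq_expand (n : ℕ) (u b : Fin n → ℝ) :
    ∑ i : Fin n, (u i - b i) ^ 2
      = ∑ i : Fin n, (u i) ^ 2 - 2 * ∑ i : Fin n, b i * u i + ∑ i : Fin n, (b i) ^ 2 := by
  calc ∑ i : Fin n, (u i - b i) ^ 2
      = ∑ i : Fin n, ((u i) ^ 2 - 2 * (b i * u i) + (b i) ^ 2) :=
        Finset.sum_congr rfl fun i _ => by ring
    _ = ∑ i : Fin n, (u i) ^ 2 - 2 * ∑ i : Fin n, b i * u i + ∑ i : Fin n, (b i) ^ 2 := by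
        rw [Finset.sum_add_distrib, Finset.sum_sub_distrib, ← Finset.mul_sum]

end Aux

/-- `Prox_{ι⁻¹h}(x) = Pᵀ Π_D(x↓ - ρw)` where `x↓ = Px` is the
nonincreasing rearrangement of `x`, `D` is the cone of nonincreasing vectors,
`w_i = n - 2i + 1` (1-based) and `ρ = 1/(ι n(n-1))`.  Here the permutation `P` is
encoded by `e : Equiv.Perm (Fin n)` with `x↓ = x ∘ e`, so `Pᵀ z = z ∘ e.symm`,
and all Euclidean norms are written as sums of squares. -/
theorem prox_pairwiseLoss_formula (n : ℕ) (hn : 2 ≤ n) (ι : ℝ) (hι : 0 < ι)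
    (x : Fin n → ℝ) (e : Equiv.Perm (Fin n))
    (hsort : ∀ i j : Fin n, i ≤ j → x (e j) ≤ x (e i))
    (D : Set (Fin n → ℝ)) (hD : D = {z | ∀ i j : Fin n, i ≤ j → z j ≤ z i})
    (w : Fin n → ℝ) (hw : ∀ i : Fin n, w i = (n : ℝ) - 2 * ((i : ℕ) : ℝ) - 1)
    (ρ : ℝ) (hρ : ρ = 1 / (ι * (n : ℝ) * ((n : ℝ) - 1)))
    (proj : Fin n → ℝ)
    (hproj_mem : proj ∈ D)
    (hproj : ∀ z ∈ D, ∑ i, (proj i - ((x (e i)) - ρ * w i)) ^ 2 ≤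
        ∑ i, (z i - ((x (e i)) - ρ * w i)) ^ 2) :
    ∀ z : Fin n → ℝ,
      ι⁻¹ * pairwiseLoss n (proj ∘ e.symm) + (1 / 2) * ∑ i, ((proj ∘ e.symm) i - x i) ^ 2 ≤
        ι⁻¹ * pairwiseLoss n z + (1 / 2) * ∑ i, (z i - x i) ^ 2 := by
  intro z
  have hn0 : (n : ℝ) ≠ 0 := by
    have : (0:ℝ) < n := by exact_mod_cast Nat.lt_of_lt_of_le (by norm_num) hn
    linarith
  have hn1 : (n : ℝ) - 1 ≠ 0 := by
    have : (2:ℝ) ≤ n := by exact_mod_cast hn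
    linarith
  have hι0 : ι ≠ 0 := ne_of_gt hι
  -- the linear form of the loss on nonincreasing vectors
  have hlin : ∀ v' : Fin n → ℝ, (∀ i j : Fin n, i ≤ j → v' j ≤ v' i) →
      ι⁻¹ * pairwiseLoss n v' = ρ * ∑ i, w i * v' i := by
    intro v' hv'
    unfold pairwiseLoss
    rw [sum_abs_antitone n v' hv',
      show (∑ i : Fin n, ((n : ℝ) - 2 * ((i : ℕ) : ℝ) - 1) * v' i)
        = ∑ i : Fin n, w i * v' i from Finset.sum_congr rfl fun i _ => by rw [hw i], hρ]
    have hc : ι⁻¹ * (1 / ((n : ℝ) * ((n : ℝ) - 1))) = 1 / (ι * (n : ℝ) * ((n : ℝ) - 1)) := by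
      field_simp
    rw [← mul_assoc, hc]
  -- completing the square
  have hquad : ∀ v' : Fin n → ℝ,
      ρ * ∑ i, w i * v' i + (1 / 2) * ∑ i, (v' i - x (e i)) ^ 2
        = (1 / 2) * ∑ i, (v' i - (x (e i) - ρ * w i)) ^ 2
          + (ρ * ∑ i, w i * x (e i) - (1 / 2) * ρ ^ 2 * ∑ i, (w i) ^ 2) := by
    intro v'
    have e1 : ∑ i : Fin n, (v' i - (x (e i) - ρ * w i)) ^ 2
        = ∑ i : Fin n, ((v' i - x (e i)) ^ 2 + 2 * ρ * (w i * v' i)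
            - 2 * ρ * (w i * x (e i)) + ρ ^ 2 * (w i) ^ 2) :=
      Finset.sum_congr rfl fun i _ => by ring
    rw [e1, Finset.sum_add_distrib, Finset.sum_sub_distrib, Finset.sum_add_distrib,
      ← Finset.mul_sum, ← Finset.mul_sum, ← Finset.mul_sum]
    ring
  -- move everything through the sorting permutation e
  have hF1 : pairwiseLoss n (proj ∘ ⇑e.symm) = pairwiseLoss n proj := by
    have h := pairwiseLoss_comp_perm n (proj ∘ ⇑e.symm) e
    rw [show (proj ∘ ⇑e.symm) ∘ ⇑e = proj from funext fun i => by simp] at h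
    exact h.symm
  have hF2 : ∑ i, ((proj ∘ ⇑e.symm) i - x i) ^ 2 = ∑ i, (proj i - x (e i)) ^ 2 := by
    have h := Equiv.sum_comp e (fun i => ((proj ∘ ⇑e.symm) i - x i) ^ 2)
    simp only [Function.comp_apply, Equiv.symm_apply_apply] at h ⊢
    exact h.symm
  set v : Fin n → ℝ := fun i => z (e i) with hv
  have hF3 : pairwiseLoss n v = pairwiseLoss n z := pairwiseLoss_comp_perm n z e
  have hF4 : ∑ i, (v i - x (e i)) ^ 2 = ∑ i, (z i - x i) ^ 2 :=
    Equiv.sum_comp e (fun i => (z i - x i) ^ 2)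
  -- sort v
  set σ : Equiv.Perm (Fin n) := Tuple.sort (fun i => -(v i)) with hσ
  set u : Fin n → ℝ := fun i => v (σ i) with hu
  have hu_mono : ∀ i j : Fin n, i ≤ j → u j ≤ u i := by
    intro i j hij
    have h := Tuple.monotone_sort (fun i => -(v i)) hij
    simp only [Function.comp_apply] at h
    simp only [hu]
    linarith
  have hplu : pairwiseLoss n u = pairwiseLoss n v := pairwiseLoss_comp_perm n v σ
  have husq : ∑ i, (u i) ^ 2 = ∑ i, (v i) ^ 2 := Equiv.sum_comp σ (fun i => (v i) ^ 2)
  have hmono : Monovary (fun i => x (e i)) u := by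
    intro i j hij
    rcases le_or_gt i j with h | h
    · exact absurd (hu_mono i j h) (not_le.mpr hij)
    · exact hsort j i (le_of_lt h)
  have hcross : ∑ i, x (e i) * v i ≤ ∑ i, x (e i) * u i := by
    have h := hmono.sum_mul_comp_perm_le_sum_mul (σ := σ.symm)
    have hv' : ∀ i, u (σ.symm i) = v i := fun i => by simp [hu]
    calc ∑ i, x (e i) * v i = ∑ i, x (e i) * u (σ.symm i) :=
          Finset.sum_congr rfl fun i _ => by rw [hv' i]
      _ ≤ ∑ i, x (e i) * u i := h
  have hnorm : ∑ i, (u i - x (e i)) ^ 2 ≤ ∑ i, (v i - x (e i)) ^ 2 := by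
    have h1 := sum_sq_expand n u (fun i => x (e i))
    have h2 := sum_sq_expand n v (fun i => x (e i))
    linarith
  -- the projection step
  have hprojD : ∀ i j : Fin n, i ≤ j → proj j ≤ proj i := by
    rw [hD] at hproj_mem; exact hproj_mem
  have huD : u ∈ D := by rw [hD]; exact fun i j h => hu_mono i j h
  have hp := hproj u huD
  -- assemble
  have E1 := hlin proj hprojD
  have E2 := hlin u hu_mono
  have Q1 := hquad proj
  have Q2 := hquad u
  rw [hF1, hF2, ← hF3, ← hF4]
  calc ι⁻¹ * pairwiseLoss n proj + (1 / 2) * ∑ i, (proj i - x (e i)) ^ 2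
      = (1 / 2) * ∑ i, (proj i - (x (e i) - ρ * w i)) ^ 2
        + (ρ * ∑ i, w i * x (e i) - (1 / 2) * ρ ^ 2 * ∑ i, (w i) ^ 2) := by
        rw [E1]; exact Q1
    _ ≤ (1 / 2) * ∑ i, (u i - (x (e i) - ρ * w i)) ^ 2
        + (ρ * ∑ i, w i * x (e i) - (1 / 2) * ρ ^ 2 * ∑ i, (w i) ^ 2) := by linarith
    _ = ι⁻¹ * pairwiseLoss n u + (1 / 2) * ∑ i, (u i - x (e i)) ^ 2 := by
        rw [E2]; exact Q2.symm
    _ ≤ ι⁻¹ * pairwiseLoss n v + (1 / 2) * ∑ i, (v i - x (e i)) ^ 2 := by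
        rw [hplu]; linarith
end
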